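/- arXiv:2212.00048 — 10 statements merged into one kernel-verified Lean document; each statement's English description precedes it below -/
import Mathlib

section
/- Let V be a finite metric space such that for any two points x, y of V there exists a bijective self-isometry of V mapping x to y. Let C be a subset of V in which any two distinct elements are at distance at least d, and let A be a nonempty subset of V in which any two elements are at distance at most D, where D < d. Then |C| · |A| ≤ |V|. -/
/-- Code--anticode bound for a finite metric space with a point-transitive
isometry group. -/
theorem stmt_0 {V : Type*} [MetricSpace V] [Fintype V]
    (htrans : ∀ x y : V, ∃ f : V ≃ V, Isometry (f : V → V) ∧ f x = y)
    (d D : ℝ) (hDd : D < d)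
    (C A : Finset V) (hA : A.Nonempty)
    (hC : ∀ x ∈ C, ∀ y ∈ C, x ≠ y → d ≤ dist x y)
    (hAd : ∀ x ∈ A, ∀ y ∈ A, dist x y ≤ D) :
    C.card * A.card ≤ Fintype.card V := by
  classical
  obtain ⟨a0, ha0⟩ := hA
  set H : Finset (Equiv.Perm V) := Finset.univ.filter (fun f => Isometry (f : V → V))
    with hHdef
  have hmem : ∀ f ∈ H, Isometry (f : V → V) := by
    intro f hf; simpa [hHdef] using hf
  have htrans' : ∀ x y : V, ∃ f ∈ H, f x = y := by
    intro x y
    obtain ⟨f, hf, hfx⟩ := htrans x y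
    exact ⟨f, by simp [hHdef, hf], hfx⟩
  have hmul : ∀ f ∈ H, ∀ g ∈ H, f * g ∈ H := by
    intro f hf g hg
    simp only [hHdef, Finset.mem_filter, Finset.mem_univ, true_and] at *
    exact hf.comp hg
  have hinv : ∀ f ∈ H, f⁻¹ ∈ H := by
    intro f hf
    simp only [hHdef, Finset.mem_filter, Finset.mem_univ, true_and] at *
    intro x y
    have := hf (f⁻¹ x) (f⁻¹ y)
    simpa using this.symm
  set s := (H.filter (fun f => f a0 = a0)).card with hsdef
  -- the number of elements of H taking a to c is s, for any a, c
  have key : ∀ a c : V, (H.filter (fun f => f a = c)).card = s := by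
    intro a c
    obtain ⟨h1, h1H, h1a⟩ := htrans' a0 a
    obtain ⟨h2, h2H, h2a⟩ := htrans' a0 c
    rw [hsdef]
    apply Finset.card_bij' (fun g _ => h2⁻¹ * g * h1) (fun k _ => h2 * k * h1⁻¹)
    · intro g hg
      simp only [Finset.mem_filter] at hg ⊢
      refine ⟨hmul _ (hmul _ (hinv _ h2H) _ hg.1) _ h1H, ?_⟩
      simp [Equiv.Perm.mul_apply, h1a, hg.2, ← h2a]
    · intro k hk
      simp only [Finset.mem_filter] at hk ⊢
      refine ⟨hmul _ (hmul _ h2H _ hk.1) _ (hinv _ h1H), ?_⟩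
      have : h1⁻¹ a = a0 := by rw [← h1a]; simp
      simp [Equiv.Perm.mul_apply, this, hk.2, h2a]
    · intro g _; ext x; simp [Equiv.Perm.mul_apply]
    · intro k _; ext x; simp [Equiv.Perm.mul_apply]
  have hG : H.card = Fintype.card V * s := by
    rw [Finset.card_eq_sum_card_fiberwise
      (f := fun f => f a0) (t := Finset.univ) (fun x _ => Finset.mem_univ _)]
    simp [key]
  -- each translate of A meets C in at most one point
  have upper : ∀ f ∈ H, ((A.image f) ∩ C).card ≤ 1 := by
    intro f hf
    refine Finset.card_le_one.mpr ?_
    intro x hx y hy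
    simp only [Finset.mem_inter, Finset.mem_image] at hx hy
    obtain ⟨⟨a, ha, rfl⟩, hxC⟩ := hx
    obtain ⟨⟨b, hb, rfl⟩, hyC⟩ := hy
    by_contra hne
    have h1 : d ≤ dist (f a) (f b) := hC _ hxC _ hyC hne
    have h2 : dist (f a) (f b) ≤ D := by
      rw [(hmem f hf).dist_eq]; exact hAd a ha b hb
    linarith
  -- counting identity
  have count : ∑ f ∈ H, ((A.image f) ∩ C).card = C.card * A.card * s := by
    have step1 : ∀ f ∈ H, ((A.image f) ∩ C).card
        = ∑ c ∈ C, ∑ a ∈ A, (if f a = c then 1 else 0) := by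
      intro f _
      have : (A.image f) ∩ C = C.filter (fun c => c ∈ A.image f) := by
        ext x; simp [Finset.mem_filter, Finset.mem_inter, and_comm]
      rw [this, Finset.card_filter]
      refine Finset.sum_congr rfl ?_
      intro c _
      by_cases hc : c ∈ A.image f
      · obtain ⟨a, ha, rfl⟩ := Finset.mem_image.mp hc
        rw [if_pos hc]
        have hcond : ∀ b, (f b = f a) ↔ (b = a) := fun b => f.injective.eq_iff
        simp only [hcond]
        simp [Finset.sum_ite_eq', ha]
      · rw [if_neg hc]
        refine (Finset.sum_eq_zero fun a ha => ?_).symm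
        have : f a ≠ c := fun h => hc (Finset.mem_image.mpr ⟨a, ha, h⟩)
        simp [this]
    calc ∑ f ∈ H, ((A.image f) ∩ C).card
        = ∑ f ∈ H, ∑ c ∈ C, ∑ a ∈ A, (if f a = c then 1 else 0) :=
          Finset.sum_congr rfl step1
      _ = ∑ c ∈ C, ∑ a ∈ A, ∑ f ∈ H, (if f a = c then 1 else 0) := by
          rw [Finset.sum_comm]
          exact Finset.sum_congr rfl fun c _ => Finset.sum_comm
      _ = ∑ c ∈ C, ∑ a ∈ A, s := by
          refine Finset.sum_congr rfl fun c _ => Finset.sum_congr rfl fun a _ => ?_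
          rw [← Finset.card_filter]
          exact key a c
      _ = C.card * A.card * s := by
          simp [Finset.sum_const, mul_assoc, Nat.smul_one_eq_cast]
  have total : ∑ f ∈ H, ((A.image f) ∩ C).card ≤ H.card := by
    calc ∑ f ∈ H, ((A.image f) ∩ C).card ≤ ∑ f ∈ H, 1 := Finset.sum_le_sum upper
      _ = H.card := by simp
  have hs : 0 < s := by
    refine Finset.card_pos.mpr ⟨1, ?_⟩
    simp [hHdef, isometry_id]
  have final : C.card * A.card * s ≤ Fintype.card V * s := by
    rw [← count, ← hG]; exact total
  exact Nat.le_of_mul_le_mul_right final hs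
end

section
/- Let 0 ≤ s ≤ w ≤ n and let T be a family of w-element subsets of {1,…,n} such that any two members of T intersect in at least s elements, and such that T has maximum cardinality among all families of w-element subsets of {1,…,n} with pairwise intersections of size at least s. For each q ≥ 2, let A_q ⊆ Z_q^n be the set of all words whose support belongs to T (so |A_q| = |T|·(q−1)^w). Then there exists q_0 such that for every q ≥ q_0, A_q is a maximum anticode of diameter 2w−s in J_q(n,w): any two words of A_q are at Hamming distance at most 2w−s, and every subset of J_q(n,w) whose pairwise Hamming distances are at most 2w−s has cardinality at most |T|·(q−1)^w. -/
/-- The support of a word over the alphabet `{0, ..., q-1}` (represented as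
naturals below `q`): the set of coordinates with nonzero entries. -/
def suppN {n : ℕ} (x : Fin n → ℕ) : Finset (Fin n) :=
  Finset.univ.filter (fun i => x i ≠ 0)

lemma suppN_spec {n : ℕ} (x : Fin n → ℕ) (i : Fin n) : i ∈ suppN x ↔ x i ≠ 0 := by
  simp [suppN]

/-- Counting lemma: the number of words in `B` with support exactly `a`,
agreeing with a fixed word `y` on a set `J`, is at most `(q-1)^|a \ J|`. -/
lemma card_fiber_le {n q : ℕ} (B : Finset (Fin n → ℕ)) (hq : ∀ x ∈ B, ∀ i, x i < q)
    (a J : Finset (Fin n)) (y : Fin n → ℕ) :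
    (B.filter (fun x => suppN x = a ∧ ∀ j ∈ J, x j = y j)).card ≤ (q - 1) ^ (a \ J).card := by
  classical
  have key : (B.filter (fun x => suppN x = a ∧ ∀ j ∈ J, x j = y j)).card
      ≤ ((a \ J).pi (fun _ => Finset.Ioo 0 q)).card := by
    apply Finset.card_le_card_of_injOn (fun x i _ => x i)
    · intro x hx
      simp only [Finset.mem_coe, Finset.mem_filter] at hx
      obtain ⟨hxB, hsupp, _⟩ := hx
      rw [Finset.mem_coe, Finset.mem_pi]
      intro i hi
      have hi' : i ∈ a := (Finset.mem_sdiff.mp hi).1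
      have hx0 : x i ≠ 0 := by
        rw [← hsupp] at hi'
        exact (suppN_spec x i).mp hi'
      exact Finset.mem_Ioo.mpr ⟨Nat.pos_of_ne_zero hx0, hq x hxB i⟩
    · intro x hx x' hx' h
      simp only [Finset.mem_coe, Finset.mem_filter] at hx hx'
      funext i
      by_cases hia : i ∈ a
      · by_cases hiJ : i ∈ J
        · rw [hx.2.2 i hiJ, hx'.2.2 i hiJ]
        · have hi : i ∈ a \ J := Finset.mem_sdiff.mpr ⟨hia, hiJ⟩
          exact congrFun (congrFun h i) hi
      · have h1 : x i = 0 := by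
          by_contra hne
          exact hia (hx.2.1 ▸ (suppN_spec x i).mpr hne)
        have h2 : x' i = 0 := by
          by_contra hne
          exact hia (hx'.2.1 ▸ (suppN_spec x' i).mpr hne)
        rw [h1, h2]
  calc (B.filter (fun x => suppN x = a ∧ ∀ j ∈ J, x j = y j)).card
      ≤ ((a \ J).pi (fun _ => Finset.Ioo 0 q)).card := key
    _ = (q - 1) ^ (a \ J).card := by
        rw [Finset.card_pi, Finset.prod_const]
        congr 1
        simp [Nat.card_Ioo]

/-- For a maximum `s`-intersecting family `T` of `w`-subsets of `[n]` and large
enough `q`, the set `A_q` of words with support in `T` is a maximum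
diameter-`(2w-s)` anticode in `J_q(n,w)`. -/
theorem stmt_2 (n w s : ℕ) (hsw : s ≤ w) (hwn : w ≤ n)
    (T : Finset (Finset (Fin n)))
    (hTw : ∀ b ∈ T, b.card = w)
    (hTint : ∀ a ∈ T, ∀ b ∈ T, s ≤ (a ∩ b).card)
    (hTmax : ∀ T' : Finset (Finset (Fin n)), (∀ b ∈ T', b.card = w) →
      (∀ a ∈ T', ∀ b ∈ T', s ≤ (a ∩ b).card) → T'.card ≤ T.card) :
    ∃ q0 : ℕ, 2 ≤ q0 ∧ ∀ q, q0 ≤ q →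
      ((∀ x y : Fin n → ℕ, (∀ i, x i < q) → (∀ i, y i < q) →
          suppN x ∈ T → suppN y ∈ T → hammingDist x y ≤ 2 * w - s) ∧
       (∀ B : Finset (Fin n → ℕ),
          (∀ x ∈ B, (∀ i, x i < q) ∧ (suppN x).card = w) →
          (∀ x ∈ B, ∀ y ∈ B, hammingDist x y ≤ 2 * w - s) →
          B.card ≤ T.card * (q - 1) ^ w)) := by
  classical
  refine ⟨n.choose w * s + 2, by omega, ?_⟩
  intro q hq
  constructor
  · -- Part 1: A_q is an anticode of diameter 2w - s
    intro x y _ _ hxT hyT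
    have hx := hTw _ hxT
    have hy := hTw _ hyT
    have hint := hTint _ hxT _ hyT
    have hsub : Finset.univ.filter (fun i => x i ≠ y i) ⊆ suppN x ∪ suppN y := by
      intro i hi
      simp only [Finset.mem_filter] at hi
      rw [Finset.mem_union, suppN_spec, suppN_spec]
      by_contra hc
      push_neg at hc
      rw [hc.1, hc.2] at hi
      exact hi.2 rfl
    have h1 : hammingDist x y ≤ (suppN x ∪ suppN y).card := by
      have : hammingDist x y = (Finset.univ.filter (fun i => x i ≠ y i)).card := rfl
      rw [this]
      exact Finset.card_le_card hsub
    have h2 := Finset.card_union_add_card_inter (suppN x) (suppN y)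
    omega
  · -- Part 2: maximality
    intro B hB hBdist
    have hqlt : ∀ x ∈ B, ∀ i, x i < q := fun x hx => (hB x hx).1
    set Q1 : ℕ := (q - 1) ^ (w - 1) with hQ1def
    set S : Finset (Finset (Fin n)) := B.image suppN with hSdef
    have hcardS : ∀ a ∈ S, a.card = w := by
      intro a ha
      obtain ⟨x, hxB, rfl⟩ := Finset.mem_image.mp ha
      exact (hB x hxB).2
    -- the plain fiber count
    have hfib : ∀ a : Finset (Fin n),
        (B.filter (fun x => suppN x = a)).card ≤ (q - 1) ^ a.card := by
      intro a
      have hle := card_fiber_le B hqlt a ∅ (fun _ => 0)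
      rw [Finset.sdiff_empty] at hle
      refine le_trans (Finset.card_le_card ?_) hle
      intro x hx
      simp only [Finset.mem_filter] at hx ⊢
      exact ⟨hx.1, hx.2, by simp⟩
    -- key lemma: fibers over supports which fail to s-intersect some used support are small
    have hDlem : ∀ a ∈ S, ∀ b ∈ S, (a ∩ b).card < s →
        (B.filter (fun x => suppN x = a)).card ≤ (s - 1) * Q1 := by
      intro a ha b hb hts
      obtain ⟨y, hyB, hyb⟩ := Finset.mem_image.mp hb
      have hsub : B.filter (fun x => suppN x = a) ⊆
          (a ∩ b).biUnion (fun i => B.filter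
            (fun x => suppN x = a ∧ ∀ j ∈ ({i} : Finset (Fin n)), x j = y j)) := by
        intro x hx
        simp only [Finset.mem_filter] at hx
        have hag : ∃ i ∈ a ∩ b, x i = y i := by
          by_contra hc
          push_neg at hc
          have hsub2 : a ∪ b ⊆ Finset.univ.filter (fun i => x i ≠ y i) := by
            intro i hi
            simp only [Finset.mem_filter, Finset.mem_univ, true_and]
            rcases Finset.mem_union.mp hi with h | h
            · by_cases hib : i ∈ b
              · exact hc i (Finset.mem_inter.mpr ⟨h, hib⟩)
              · have hx0 : x i ≠ 0 := (suppN_spec x i).mp (hx.2 ▸ h)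
                have hy0 : y i = 0 := by
                  by_contra h0
                  exact hib (hyb ▸ (suppN_spec y i).mpr h0)
                rw [hy0]; exact hx0
            · by_cases hia : i ∈ a
              · exact hc i (Finset.mem_inter.mpr ⟨hia, h⟩)
              · have hy0 : y i ≠ 0 := (suppN_spec y i).mp (hyb ▸ h)
                have hx0 : x i = 0 := by
                  by_contra h0
                  exact hia (hx.2 ▸ (suppN_spec x i).mpr h0)
                rw [hx0]; exact fun hh => hy0 hh.symm
          have h1 : (a ∪ b).card ≤ hammingDist x y := by
            have : hammingDist x y = (Finset.univ.filter (fun i => x i ≠ y i)).card := rfl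
            rw [this]
            exact Finset.card_le_card hsub2
          have h2 := hBdist x hx.1 y hyB
          have h3 := Finset.card_union_add_card_inter a b
          have hca : a.card = w := hcardS a ha
          have hcb : b.card = w := hcardS b hb
          omega
        obtain ⟨i, hi, hxy⟩ := hag
        exact Finset.mem_biUnion.mpr ⟨i, hi,
          Finset.mem_filter.mpr ⟨hx.1, hx.2, by simpa using hxy⟩⟩
      have h4 := Finset.card_le_card hsub
      have h5 : ((a ∩ b).biUnion (fun i => B.filter
            (fun x => suppN x = a ∧ ∀ j ∈ ({i} : Finset (Fin n)), x j = y j))).card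
          ≤ ∑ i ∈ a ∩ b, (B.filter
            (fun x => suppN x = a ∧ ∀ j ∈ ({i} : Finset (Fin n)), x j = y j)).card :=
        Finset.card_biUnion_le
      have h6 : ∀ i ∈ a ∩ b,
          (B.filter (fun x => suppN x = a ∧ ∀ j ∈ ({i} : Finset (Fin n)), x j = y j)).card
          ≤ Q1 := by
        intro i hi
        have hia : i ∈ a := (Finset.mem_inter.mp hi).1
        have hle := card_fiber_le B hqlt a {i} y
        have hcard : (a \ {i}).card = w - 1 := by
          rw [Finset.card_sdiff_of_subset (Finset.singleton_subset_iff.mpr hia),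
            Finset.card_singleton, hcardS a ha]
        rw [hcard] at hle
        exact hle
      have h7 : ∑ i ∈ a ∩ b,
          (B.filter (fun x => suppN x = a ∧ ∀ j ∈ ({i} : Finset (Fin n)), x j = y j)).card
          ≤ (a ∩ b).card * Q1 := by
        calc _ ≤ ∑ _i ∈ a ∩ b, Q1 := Finset.sum_le_sum h6
          _ = (a ∩ b).card * Q1 := by rw [Finset.sum_const, smul_eq_mul]
      have h8' : (a ∩ b).card ≤ s - 1 := Nat.le_sub_one_of_lt hts
      have h8 : (a ∩ b).card * Q1 ≤ (s - 1) * Q1 := Nat.mul_le_mul_right Q1 h8'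
      exact le_trans h4 (le_trans h5 (le_trans h7 h8))
    set H : Finset (Finset (Fin n)) :=
      S.filter (fun a => (s - 1) * Q1 < (B.filter (fun x => suppN x = a)).card) with hHdef
    set L : Finset (Finset (Fin n)) :=
      S.filter (fun a => ¬ (s - 1) * Q1 < (B.filter (fun x => suppN x = a)).card) with hLdef
    have hB_card : B.card = ∑ a ∈ S, (B.filter (fun x => suppN x = a)).card :=
      Finset.card_eq_sum_card_fiberwise (fun x hx => Finset.mem_image_of_mem _ hx)
    have hsplit : ∑ a ∈ H, (B.filter (fun x => suppN x = a)).card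
        + ∑ a ∈ L, (B.filter (fun x => suppN x = a)).card
        = ∑ a ∈ S, (B.filter (fun x => suppN x = a)).card :=
      Finset.sum_filter_add_sum_filter_not S _ _
    have hHsum : ∑ a ∈ H, (B.filter (fun x => suppN x = a)).card ≤ H.card * (q - 1) ^ w := by
      calc ∑ a ∈ H, (B.filter (fun x => suppN x = a)).card
          ≤ ∑ a ∈ H, (q - 1) ^ w := by
            apply Finset.sum_le_sum
            intro a ha
            have := hfib a
            rwa [hcardS a (Finset.mem_filter.mp ha).1] at this
        _ = H.card * (q - 1) ^ w := by rw [Finset.sum_const, smul_eq_mul]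
    have hLsum : ∑ a ∈ L, (B.filter (fun x => suppN x = a)).card ≤ L.card * ((s - 1) * Q1) := by
      calc ∑ a ∈ L, (B.filter (fun x => suppN x = a)).card
          ≤ ∑ a ∈ L, (s - 1) * Q1 := by
            apply Finset.sum_le_sum
            intro a ha
            have := (Finset.mem_filter.mp ha).2
            omega
        _ = L.card * ((s - 1) * Q1) := by rw [Finset.sum_const, smul_eq_mul]
    have hHw : ∀ a ∈ H, a.card = w := fun a ha => hcardS a (Finset.mem_filter.mp ha).1
    have hHint : ∀ a ∈ H, ∀ c ∈ H, s ≤ (a ∩ c).card := by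
      intro a ha c hc
      by_contra hlt
      push_neg at hlt
      have ha' := Finset.mem_filter.mp ha
      have hc' := Finset.mem_filter.mp hc
      exact absurd (hDlem a ha'.1 c hc'.1 hlt) (not_le.mpr ha'.2)
    rcases Finset.eq_empty_or_nonempty L with hLe | ⟨b, hb⟩
    · -- no light supports
      have hHT : H.card ≤ T.card := hTmax H hHw hHint
      have hzero : ∑ a ∈ L, (B.filter (fun x => suppN x = a)).card = 0 := by
        rw [hLe]; simp
      have := Nat.mul_le_mul_right ((q - 1) ^ w) hHT
      omega
    · -- some light support b
      have hb' := Finset.mem_filter.mp hb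
      have hbS : b ∈ S := hb'.1
      have hbw : b.card = w := hcardS b hbS
      have hbH : b ∉ H := by
        intro hcon
        exact hb'.2 (Finset.mem_filter.mp hcon).2
      have hinsw : ∀ c ∈ insert b H, c.card = w := by
        intro c hc
        rcases Finset.mem_insert.mp hc with rfl | hc
        · exact hbw
        · exact hHw c hc
      have hinsInt : ∀ a ∈ insert b H, ∀ c ∈ insert b H, s ≤ (a ∩ c).card := by
        intro a ha c hc
        rcases Finset.mem_insert.mp ha with ha1 | ha1 <;>
          rcases Finset.mem_insert.mp hc with hc1 | hc1
        · rw [ha1, hc1, Finset.inter_self, hbw]; exact hsw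
        · -- a = b, c ∈ H
          rw [ha1]
          by_contra hlt
          push_neg at hlt
          rw [Finset.inter_comm] at hlt
          have hc' := Finset.mem_filter.mp hc1
          exact absurd (hDlem c hc'.1 b hbS hlt) (not_le.mpr hc'.2)
        · -- a ∈ H, c = b
          rw [hc1]
          by_contra hlt
          push_neg at hlt
          have ha' := Finset.mem_filter.mp ha1
          exact absurd (hDlem a ha'.1 b hbS hlt) (not_le.mpr ha'.2)
        · exact hHint a ha1 c hc1
      have hHT1 : H.card + 1 ≤ T.card := by
        have h := hTmax (insert b H) hinsw hinsInt
        rwa [Finset.card_insert_of_notMem hbH] at h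
      have hLcard : L.card ≤ n.choose w := by
        have hsub : L ⊆ Finset.powersetCard w (Finset.univ : Finset (Fin n)) := by
          intro a ha
          rw [Finset.mem_powersetCard]
          exact ⟨Finset.subset_univ a, hcardS a (Finset.mem_filter.mp ha).1⟩
        have := Finset.card_le_card hsub
        rwa [Finset.card_powersetCard, Finset.card_univ, Fintype.card_fin] at this
      -- arithmetic conclusion
      have hLterm : L.card * ((s - 1) * Q1) ≤ (q - 1) ^ w := by
        rcases Nat.eq_zero_or_pos s with hs0 | hs1
        · subst hs0; simp
        · have hw1 : 1 ≤ w := le_trans hs1 hsw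
          have hpow : (q - 1) ^ w = (q - 1) * Q1 := by
            rw [hQ1def, ← pow_succ']
            congr 1
            omega
          rw [hpow, ← mul_assoc]
          apply Nat.mul_le_mul_right
          have h1 : L.card * (s - 1) ≤ n.choose w * (s - 1) :=
            Nat.mul_le_mul_right _ hLcard
          have h2 : n.choose w * (s - 1) ≤ n.choose w * s :=
            Nat.mul_le_mul_left _ (Nat.sub_le _ _)
          omega
      have hmain : (H.card + 1) * (q - 1) ^ w ≤ T.card * (q - 1) ^ w :=
        Nat.mul_le_mul_right _ hHT1
      have hexp : (H.card + 1) * (q - 1) ^ w = H.card * (q - 1) ^ w + (q - 1) ^ w := by ring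
      omega
end

section
/- Let 0 < t ≤ w < n and suppose a Steiner system S(t,w,n) exists. Then for every q ≥ C(n−1,t−1)/C(w−1,t−1) + 1 there exists an (n, C(n,t)/C(w,t), w, 2w−t+1)_q code whose set of codeword supports is exactly the block set of the Steiner system. -/
open Finset

/-- A Steiner system `S(t, k, n)` on the point set `Fin n`: a collection of
`k`-element blocks such that each `t`-element set of points lies in exactly
one block. -/
def IsSteiner {n : ℕ} (t k : ℕ) (B : Finset (Finset (Fin n))) : Prop :=
  (∀ b ∈ B, b.card = k) ∧
  ∀ s : Finset (Fin n), s.card = t → ∃! b, b ∈ B ∧ s ⊆ b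

/-- number of (u+1)-subsets of A containing a fixed point i -/
lemma aux_card_filter_mem {α : Type*} [DecidableEq α] (A : Finset α) (i : α)
    (hi : i ∈ A) (u : ℕ) :
    ((A.powersetCard (u+1)).filter (fun s => i ∈ s)).card
      = Nat.choose (A.card - 1) u := by
  have h1 : (A.powersetCard (u+1)).filter (fun s => i ∉ s)
      = (A.erase i).powersetCard (u+1) := by
    ext s
    simp only [mem_filter, mem_powersetCard, Finset.subset_erase]
    tauto
  have h2 := Finset.card_filter_add_card_filter_not
    (s := A.powersetCard (u+1)) (p := fun s => i ∈ s)
  rw [h1] at h2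
  rw [Finset.card_powersetCard, Finset.card_powersetCard, Finset.card_erase_of_mem hi] at h2
  obtain ⟨m, hm⟩ : ∃ m, A.card = m + 1 :=
    ⟨A.card - 1, (Nat.succ_pred_eq_of_pos (Finset.card_pos.mpr ⟨i, hi⟩)).symm⟩
  rw [hm] at h2 ⊢
  simp only [Nat.add_sub_cancel] at h2 ⊢
  have := Nat.choose_succ_succ' m u
  omega

/-- From a Steiner system `S(t,w,n)`, for every
`q ≥ C(n-1,t-1)/C(w-1,t-1) + 1` one gets an
`(n, C(n,t)/C(w,t), w, 2w-t+1)_q` code whose codeword supports are exactly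
the blocks. -/
theorem stmt_6 (n w t : ℕ) (ht : 0 < t) (htw : t ≤ w) (hwn : w < n)
    (B : Finset (Finset (Fin n))) (hB : IsSteiner t w B) :
    ∀ q : ℕ, Nat.choose (n - 1) (t - 1) / Nat.choose (w - 1) (t - 1) + 1 ≤ q →
      ∃ C : Finset (Fin n → ℕ),
        C.card = Nat.choose n t / Nat.choose w t ∧
        (∀ x ∈ C, ∀ i, x i < q) ∧
        (∀ x ∈ C, (suppN x).card = w) ∧
        (∀ x ∈ C, ∀ y ∈ C, x ≠ y → 2 * w - t + 1 ≤ hammingDist x y) ∧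
        C.image suppN = B := by
  intro q hq
  classical
  obtain ⟨hBcard, hBuniq⟩ := hB
  have ht1 : t - 1 + 1 = t := Nat.succ_pred_eq_of_pos ht
  -- the block assigned to each t-set
  set f : Finset (Fin n) → Finset (Fin n) := fun s =>
    if h : s.card = t then (hBuniq s h).exists.choose else ∅ with hf
  have hfmem : ∀ s : Finset (Fin n), s.card = t → f s ∈ B ∧ s ⊆ f s := by
    intro s h
    rw [hf]; simp only [dif_pos h]
    exact (hBuniq s h).exists.choose_spec
  have hfuniq : ∀ s : Finset (Fin n), s.card = t → ∀ b ∈ B, s ⊆ b → b = f s := by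
    intro s h b hb hsb
    obtain ⟨b', _, hu⟩ := hBuniq s h
    exact (hu b ⟨hb, hsb⟩).trans (hu (f s) (hfmem s h)).symm
  -- fiber of b under f among all t-sets
  have hfiber : ∀ b ∈ B, (((univ : Finset (Fin n)).powersetCard t).filter
      (fun s => f s = b)) = b.powersetCard t := by
    intro b hb
    ext s
    simp only [mem_filter, mem_powersetCard, subset_univ, true_and]
    constructor
    · rintro ⟨hst, hfs⟩; exact ⟨hfs ▸ (hfmem s hst).2, hst⟩
    · rintro ⟨hsb, hst⟩; exact ⟨hst, (hfuniq s hst b hb hsb).symm⟩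
  -- global count
  have h1 : B.card * Nat.choose w t = Nat.choose n t := by
    have hmem : ∀ s ∈ (univ : Finset (Fin n)).powersetCard t, f s ∈ B := by
      intro s hs
      rw [mem_powersetCard] at hs
      exact (hfmem s hs.2).1
    have hc := Finset.card_eq_sum_card_fiberwise hmem
    rw [Finset.card_powersetCard, card_univ, Fintype.card_fin] at hc
    have h2 : ∀ b ∈ B, (((univ : Finset (Fin n)).powersetCard t).filter
        (fun s => f s = b)).card = Nat.choose w t := by
      intro b hb
      rw [hfiber b hb, Finset.card_powersetCard, hBcard b hb]
    rw [Finset.sum_congr rfl h2, Finset.sum_const, smul_eq_mul] at hc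
    omega
  -- local count at each point
  have h2 : ∀ i : Fin n, (B.filter (fun b => i ∈ b)).card * Nat.choose (w-1) (t-1)
      = Nat.choose (n-1) (t-1) := by
    intro i
    set Si := ((univ : Finset (Fin n)).powersetCard t).filter (fun s => i ∈ s) with hSi
    have hmem : ∀ s ∈ Si, f s ∈ B.filter (fun b => i ∈ b) := by
      intro s hs
      rw [hSi, mem_filter, mem_powersetCard] at hs
      exact mem_filter.mpr ⟨(hfmem s hs.1.2).1, (hfmem s hs.1.2).2 hs.2⟩
    have hc := Finset.card_eq_sum_card_fiberwise hmem
    have hScard : Si.card = Nat.choose (n-1) (t-1) := by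
      have := aux_card_filter_mem (univ : Finset (Fin n)) i (mem_univ i) (t-1)
      rw [ht1, card_univ, Fintype.card_fin] at this
      exact this
    have hfib : ∀ b ∈ B.filter (fun b => i ∈ b),
        (Si.filter (fun s => f s = b)).card = Nat.choose (w-1) (t-1) := by
      intro b hb
      rw [mem_filter] at hb
      have heq : Si.filter (fun s => f s = b)
          = (b.powersetCard t).filter (fun s => i ∈ s) := by
        rw [hSi, Finset.filter_comm, hfiber b hb.1]
      have := aux_card_filter_mem b i hb.2 (t-1)
      rw [ht1, hBcard b hb.1] at this
      rw [heq, this]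
    rw [Finset.sum_congr rfl hfib, Finset.sum_const, smul_eq_mul, hScard] at hc
    omega
  -- replication bound
  have hrq : ∀ i : Fin n, (B.filter (fun b => i ∈ b)).card + 1 ≤ q := by
    intro i
    have hpos : 0 < Nat.choose (w-1) (t-1) := Nat.choose_pos (by omega)
    have he : (B.filter (fun b => i ∈ b)).card
        = Nat.choose (n-1) (t-1) / Nat.choose (w-1) (t-1) := by
      rw [← h2 i, Nat.mul_div_cancel _ hpos]
    omega
  -- the codewords
  set X : Finset (Fin n) → Fin n → ℕ := fun b i =>
    if h : b ∈ B.filter (fun c => i ∈ c)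
    then ((B.filter (fun c => i ∈ c)).equivFin ⟨b, h⟩).val + 1 else 0 with hX
  have hXzero : ∀ b (i : Fin n), i ∉ b → X b i = 0 := by
    intro b i hi
    rw [hX]; exact dif_neg (by simp [hi])
  have hXpos : ∀ b ∈ B, ∀ i ∈ b, X b i ≠ 0 := by
    intro b hb i hi
    have hm : b ∈ B.filter (fun c => i ∈ c) := mem_filter.mpr (by exact ⟨hb, hi⟩)
    rw [hX]; simp only [dif_pos hm]
    omega
  have hXlt : ∀ b ∈ B, ∀ i, X b i < q := by
    intro b hb i
    by_cases hi : i ∈ b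
    · have hm : b ∈ B.filter (fun c => i ∈ c) := mem_filter.mpr (by exact ⟨hb, hi⟩)
      rw [hX]; simp only [dif_pos hm]
      have := ((B.filter (fun c => i ∈ c)).equivFin ⟨b, hm⟩).isLt
      have := hrq i
      omega
    · rw [hXzero b i hi]
      have := hrq i
      omega
  have hsupp : ∀ b ∈ B, suppN (X b) = b := by
    intro b hb
    ext i
    simp only [suppN, mem_filter, mem_univ, true_and]
    constructor
    · intro h
      by_contra hi
      exact h (hXzero b i hi)
    · intro hi
      exact hXpos b hb i hi
  have hXinj : ∀ b ∈ B, ∀ b' ∈ B, b ≠ b' → ∀ i, i ∈ b → i ∈ b' → X b i ≠ X b' i := by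
    intro b hb b' hb' hne i hi hi' heq
    have hm : b ∈ B.filter (fun c => i ∈ c) := mem_filter.mpr (by exact ⟨hb, hi⟩)
    have hm' : b' ∈ B.filter (fun c => i ∈ c) := mem_filter.mpr (by exact ⟨hb', hi'⟩)
    rw [hX] at heq
    simp only [dif_pos hm, dif_pos hm'] at heq
    have : ((B.filter (fun c => i ∈ c)).equivFin ⟨b, hm⟩)
        = ((B.filter (fun c => i ∈ c)).equivFin ⟨b', hm'⟩) :=
      Fin.ext (by omega)
    have := (B.filter (fun c => i ∈ c)).equivFin.injective this
    exact hne (congrArg Subtype.val this)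
  -- small intersections
  have hinter : ∀ b ∈ B, ∀ b' ∈ B, b ≠ b' → (b ∩ b').card ≤ t - 1 := by
    intro b hb b' hb' hne
    by_contra hcon
    push_neg at hcon
    obtain ⟨s, hs, hscard⟩ := Finset.exists_subset_card_eq (s := b ∩ b') (n := t) (by omega)
    have h1 := hfuniq s hscard b hb (hs.trans inter_subset_left)
    have h2 := hfuniq s hscard b' hb' (hs.trans inter_subset_right)
    exact hne (h1.trans h2.symm)
  -- distance bound
  have hdist : ∀ b ∈ B, ∀ b' ∈ B, b ≠ b' → 2 * w - t + 1 ≤ hammingDist (X b) (X b') := by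
    intro b hb b' hb' hne
    have hsub : b ∪ b' ⊆ univ.filter (fun i => X b i ≠ X b' i) := by
      intro i hi
      rw [mem_union] at hi
      rw [mem_filter]
      refine ⟨mem_univ i, ?_⟩
      rcases hi with hi | hi
      · by_cases hi' : i ∈ b'
        · exact hXinj b hb b' hb' hne i hi hi'
        · rw [hXzero b' i hi']
          exact hXpos b hb i hi
      · by_cases hi' : i ∈ b
        · exact hXinj b hb b' hb' hne i hi' hi
        · rw [hXzero b i hi']
          exact fun h => hXpos b' hb' i hi h.symm
    have hcard := Finset.card_le_card hsub
    have hunion := Finset.card_union_add_card_inter b b'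
    rw [hBcard b hb, hBcard b' hb'] at hunion
    have hint := hinter b hb b' hb' hne
    have : hammingDist (X b) (X b') = (univ.filter (fun i => X b i ≠ X b' i)).card := rfl
    omega
  -- injectivity of X on B
  have hXinjOn : Set.InjOn X B := by
    intro b hb b' hb' heq
    rw [← hsupp b hb, ← hsupp b' hb', heq]
  refine ⟨B.image X, ?_, ?_, ?_, ?_, ?_⟩
  · rw [Finset.card_image_of_injOn hXinjOn]
    have hpos : 0 < Nat.choose w t := Nat.choose_pos htw
    rw [← h1, Nat.mul_div_cancel _ hpos]
  · intro x hx i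
    obtain ⟨b, hb, rfl⟩ := mem_image.mp hx
    exact hXlt b hb i
  · intro x hx
    obtain ⟨b, hb, rfl⟩ := mem_image.mp hx
    rw [hsupp b hb]
    exact hBcard b hb
  · intro x hx y hy hxy
    obtain ⟨b, hb, rfl⟩ := mem_image.mp hx
    obtain ⟨b', hb', rfl⟩ := mem_image.mp hy
    exact hdist b hb b' hb' (fun h => hxy (by rw [h]))
  · rw [Finset.image_image]
    calc B.image (suppN ∘ X) = B.image id := Finset.image_congr (fun b hb => hsupp b hb)
    _ = B := Finset.image_id
end

section
/- Let 0 < t ≤ k < n and suppose a Steiner system S(t,k,n) exists. Then for every q ≥ C(n,t)/C(k,t) − C(n−1,t−1)/C(k−1,t−1) + 1 there exists an (n, C(n,t)/C(k,t), n−k, n−t+1)_q code such that the complements (within the n-element point set) of the codeword supports are exactly the blocks of the Steiner system. -/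
open Finset in
/-- Double counting: if the fibers `F b` partition `T`, the sum of their sizes is `#T`. -/
lemma dc_aux {α β : Type*} [DecidableEq α] (B : Finset β) (T : Finset α) (F : β → Finset α)
    (hsub : ∀ b ∈ B, F b ⊆ T)
    (hcov : ∀ a ∈ T, ∃! b, b ∈ B ∧ a ∈ F b) :
    ∑ b ∈ B, (F b).card = T.card := by
  have hdisj : ∀ b ∈ B, ∀ b' ∈ B, b ≠ b' → Disjoint (F b) (F b') := by
    intro b hb b' hb' hne
    rw [Finset.disjoint_left]
    intro a hab hab'
    rcases hcov a (hsub b hb hab) with ⟨c, -, huniq⟩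
    exact hne ((huniq b ⟨hb, hab⟩).trans (huniq b' ⟨hb', hab'⟩).symm)
  rw [← Finset.card_biUnion hdisj]
  congr 1
  apply Finset.Subset.antisymm
  · intro a ha
    rcases Finset.mem_biUnion.1 ha with ⟨b, hb, hab⟩
    exact hsub b hb hab
  · intro a ha
    rcases hcov a ha with ⟨b, ⟨hb, hab⟩, -⟩
    exact Finset.mem_biUnion.2 ⟨b, hb, hab⟩

open Finset in
/-- The number of `t`-subsets of `u` containing a fixed point `p ∈ u`. -/
lemma count_contains {α : Type*} [DecidableEq α] (u : Finset α) (p : α) (hp : p ∈ u)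
    (t : ℕ) (ht : 0 < t) :
    ((u.powersetCard t).filter (fun s => p ∈ s)).card = (u.card - 1).choose (t - 1) := by
  rw [← Finset.card_erase_of_mem hp, ← Finset.card_powersetCard]
  apply Finset.card_nbij' (fun s => s.erase p) (fun s => insert p s)
  · intro s hs
    simp only [Finset.mem_coe, Finset.mem_filter, Finset.mem_powersetCard] at hs ⊢
    obtain ⟨⟨hsu, hcard⟩, hps⟩ := hs
    refine ⟨fun i hi => ?_, ?_⟩
    · rw [Finset.mem_erase] at hi ⊢
      exact ⟨hi.1, hsu hi.2⟩
    · rw [Finset.card_erase_of_mem hps, hcard]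
  · intro s hs
    simp only [Finset.mem_coe, Finset.mem_filter, Finset.mem_powersetCard] at hs ⊢
    obtain ⟨hsu, hcard⟩ := hs
    have hps : p ∉ s := fun h => (Finset.mem_erase.1 (hsu h)).1 rfl
    refine ⟨⟨Finset.insert_subset hp (hsu.trans (Finset.erase_subset _ _)), ?_⟩,
      Finset.mem_insert_self _ _⟩
    rw [Finset.card_insert_of_notMem hps, hcard]
    omega
  · intro s hs
    simp only [Finset.mem_coe, Finset.mem_filter] at hs
    exact Finset.insert_erase hs.2
  · intro s hs
    simp only [Finset.mem_coe, Finset.mem_powersetCard] at hs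
    have hps : p ∉ s := fun h => (Finset.mem_erase.1 (hs.1 h)).1 rfl
    exact Finset.erase_insert hps

/-- From a Steiner system `S(t,k,n)`, for every
`q ≥ C(n,t)/C(k,t) - C(n-1,t-1)/C(k-1,t-1) + 1` one gets an
`(n, C(n,t)/C(k,t), n-k, n-t+1)_q` code such that the complements of the
codeword supports are exactly the blocks. -/
theorem stmt_7 (n k t : ℕ) (ht : 0 < t) (htk : t ≤ k) (hkn : k < n)
    (B : Finset (Finset (Fin n))) (hB : IsSteiner t k B) :
    ∀ q : ℕ,
      Nat.choose n t / Nat.choose k t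
        - Nat.choose (n - 1) (t - 1) / Nat.choose (k - 1) (t - 1) + 1 ≤ q →
      ∃ C : Finset (Fin n → ℕ),
        C.card = Nat.choose n t / Nat.choose k t ∧
        (∀ x ∈ C, ∀ i, x i < q) ∧
        (∀ x ∈ C, (suppN x).card = n - k) ∧
        (∀ x ∈ C, ∀ y ∈ C, x ≠ y → n - t + 1 ≤ hammingDist x y) ∧
        C.image (fun x => (suppN x)ᶜ) = B := by
  classical
  intro q hq
  obtain ⟨hBk, hBu⟩ := hB
  have hkt : 0 < k.choose t := Nat.choose_pos htk
  have hkt' : 0 < (k - 1).choose (t - 1) := Nat.choose_pos (by omega)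
  -- total number of blocks
  have hM : B.card * k.choose t = n.choose t := by
    have hdc := dc_aux B (Finset.univ.powersetCard t) (fun b => b.powersetCard t)
      (fun b hb => (Finset.powersetCard_mono (Finset.subset_univ b)))
      (by
        intro a ha
        rw [Finset.mem_powersetCard] at ha
        obtain ⟨b, ⟨hb, hab⟩, huniq⟩ := hBu a ha.2
        refine ⟨b, ⟨hb, Finset.mem_powersetCard.2 ⟨hab, ha.2⟩⟩, ?_⟩
        intro b' ⟨hb', hab'⟩
        exact huniq b' ⟨hb', (Finset.mem_powersetCard.1 hab').1⟩)
    rw [Finset.card_powersetCard, Finset.card_univ, Fintype.card_fin] at hdc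
    rw [← hdc]
    rw [Finset.sum_congr rfl (fun b hb => by rw [Finset.card_powersetCard, hBk b hb])]
    rw [Finset.sum_const, smul_eq_mul]
  -- replication number
  have hr : ∀ p : Fin n, (B.filter (fun b => p ∈ b)).card * (k - 1).choose (t - 1)
      = (n - 1).choose (t - 1) := by
    intro p
    have hdc := dc_aux (B.filter (fun b => p ∈ b))
      ((Finset.univ.powersetCard t).filter (fun s => p ∈ s))
      (fun b => (b.powersetCard t).filter (fun s => p ∈ s))
      (by
        intro b hb s hs
        rw [Finset.mem_filter] at hs ⊢
        exact ⟨Finset.powersetCard_mono (Finset.subset_univ b) hs.1, hs.2⟩)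
      (by
        intro a ha
        rw [Finset.mem_filter, Finset.mem_powersetCard] at ha
        obtain ⟨⟨-, hacard⟩, hpa⟩ := ha
        obtain ⟨b, ⟨hb, hab⟩, huniq⟩ := hBu a hacard
        refine ⟨b, ⟨Finset.mem_filter.2 ⟨hb, hab hpa⟩,
          Finset.mem_filter.2 ⟨Finset.mem_powersetCard.2 ⟨hab, hacard⟩, hpa⟩⟩, ?_⟩
        intro b' ⟨hb', hab'⟩
        rw [Finset.mem_filter] at hb' hab'
        exact huniq b' ⟨hb'.1, (Finset.mem_powersetCard.1 hab'.1).1⟩)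
    rw [count_contains Finset.univ p (Finset.mem_univ p) t ht, Finset.card_univ,
      Fintype.card_fin] at hdc
    have hsum : ∑ b ∈ B.filter (fun b => p ∈ b),
        ((b.powersetCard t).filter (fun s => p ∈ s)).card
        = (B.filter (fun b => p ∈ b)).card * (k - 1).choose (t - 1) := by
      calc ∑ b ∈ B.filter (fun b => p ∈ b),
            ((b.powersetCard t).filter (fun s => p ∈ s)).card
          = ∑ _b ∈ B.filter (fun b => p ∈ b), (k - 1).choose (t - 1) :=
            Finset.sum_congr rfl (fun b hb => by
              rw [Finset.mem_filter] at hb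
              rw [count_contains b p hb.2 t ht, hBk b hb.1])
        _ = _ := by rw [Finset.sum_const, smul_eq_mul]
    rw [← hdc]
    exact hsum.symm
  have hMq : B.card = n.choose t / k.choose t := by
    rw [← hM, Nat.mul_div_cancel _ hkt]
  have hRp : ∀ p : Fin n, (B.filter (fun b => p ∈ b)).card
      = (n - 1).choose (t - 1) / (k - 1).choose (t - 1) := by
    intro p; rw [← hr p, Nat.mul_div_cancel _ hkt']
  -- the encoding and the codewords
  set f : Finset (Fin n) → ℕ := Encodable.encode with hf
  have hfinj : Function.Injective f := Encodable.encode_injective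
  set x : Finset (Fin n) → (Fin n → ℕ) := fun b i =>
    if i ∈ b then 0 else (B.filter (fun c => i ∉ c ∧ f c < f b)).card + 1 with hx
  have hsupp : ∀ b, suppN (x b) = bᶜ := by
    intro b
    ext i
    simp only [suppN, Finset.mem_filter, Finset.mem_univ, true_and, Finset.mem_compl, hx]
    by_cases hib : i ∈ b <;> simp [hib]
  -- injectivity
  have hinj : Set.InjOn x B := by
    intro b hb b' hb' hxy
    have := congrArg (fun s => sᶜ) (congrArg suppN hxy)
    simpa [hsupp, compl_compl] using this
  -- ranks of distinct blocks missing a coordinate differ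
  have hrank : ∀ b ∈ B, ∀ b' ∈ B, ∀ i : Fin n, i ∉ b → i ∉ b' → b ≠ b' →
      (B.filter (fun c => i ∉ c ∧ f c < f b)).card
        ≠ (B.filter (fun c => i ∉ c ∧ f c < f b')).card := by
    have key : ∀ b ∈ B, ∀ b' ∈ B, ∀ i : Fin n, i ∉ b → i ∉ b' → f b < f b' →
        (B.filter (fun c => i ∉ c ∧ f c < f b)).card
          < (B.filter (fun c => i ∉ c ∧ f c < f b')).card := by
      intro b hb b' hb' i hib hib' hlt
      apply Finset.card_lt_card
      rw [Finset.ssubset_iff_of_subset]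
      · exact ⟨b, Finset.mem_filter.2 ⟨hb, hib, hlt⟩,
          fun h => absurd (Finset.mem_filter.1 h).2.2 (lt_irrefl _)⟩
      · intro c hc
        rw [Finset.mem_filter] at hc ⊢
        exact ⟨hc.1, hc.2.1, hc.2.2.trans hlt⟩
    intro b hb b' hb' i hib hib' hne
    rcases lt_or_gt_of_ne (fun h => hne (hfinj h)) with h | h
    · exact Nat.ne_of_lt (key b hb b' hb' i hib hib' h)
    · exact Nat.ne_of_gt (key b' hb' b hb i hib' hib h)
  -- coordinates of agreement lie in the intersection
  have hdiff : ∀ b ∈ B, ∀ b' ∈ B, b ≠ b' → ∀ i : Fin n, x b i = x b' i → i ∈ b ∩ b' := by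
    intro b hb b' hb' hne i hi
    simp only [hx] at hi
    by_cases hib : i ∈ b
    · by_cases hib' : i ∈ b'
      · exact Finset.mem_inter.2 ⟨hib, hib'⟩
      · exfalso; simp [hib, hib'] at hi
    · by_cases hib' : i ∈ b'
      · exfalso; simp [hib, hib'] at hi
      · exfalso
        simp only [hib, hib', if_false] at hi
        have := hrank b hb b' hb' i hib hib' hne
        omega
  -- distinct blocks meet in at most t-1 points
  have hint : ∀ b ∈ B, ∀ b' ∈ B, b ≠ b' → (b ∩ b').card ≤ t - 1 := by
    intro b hb b' hb' hne
    by_contra hcon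
    push_neg at hcon
    have : t ≤ (b ∩ b').card := by omega
    obtain ⟨s, hs, hscard⟩ := Finset.exists_subset_card_eq this
    obtain ⟨c, -, huniq⟩ := hBu s hscard
    exact hne ((huniq b ⟨hb, hs.trans Finset.inter_subset_left⟩).trans
      (huniq b' ⟨hb', hs.trans Finset.inter_subset_right⟩).symm)
  refine ⟨B.image x, ?_, ?_, ?_, ?_, ?_⟩
  · rw [Finset.card_image_of_injOn hinj, hMq]
  · -- alphabet bound
    intro y hy i
    obtain ⟨b, hb, rfl⟩ := Finset.mem_image.1 hy
    simp only [hx]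
    by_cases hib : i ∈ b
    · simp only [hib, if_true]; omega
    · simp only [hib, if_false]
      have hlt : (B.filter (fun c => i ∉ c ∧ f c < f b)).card
          < (B.filter (fun c => i ∉ c)).card := by
        apply Finset.card_lt_card
        rw [Finset.ssubset_iff_of_subset]
        · exact ⟨b, Finset.mem_filter.2 ⟨hb, hib⟩,
            fun h => absurd (Finset.mem_filter.1 h).2.2 (lt_irrefl _)⟩
        · intro c hc
          rw [Finset.mem_filter] at hc ⊢
          exact ⟨hc.1, hc.2.1⟩
      have hsplit : (B.filter (fun c => i ∈ c)).card
          + (B.filter (fun c => i ∉ c)).card = B.card :=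
        Finset.card_filter_add_card_filter_not (fun c => i ∈ c)
      have h1 := hRp i
      omega
  · -- weight
    intro y hy
    obtain ⟨b, hb, rfl⟩ := Finset.mem_image.1 hy
    rw [hsupp b, Finset.card_compl, hBk b hb, Fintype.card_fin]
  · -- distance
    intro y hy z hz hne
    obtain ⟨b, hb, rfl⟩ := Finset.mem_image.1 hy
    obtain ⟨b', hb', rfl⟩ := Finset.mem_image.1 hz
    have hbb' : b ≠ b' := fun h => hne (by rw [h])
    have hsub : (Finset.univ.filter (fun i => x b i = x b' i)) ⊆ b ∩ b' := by
      intro i hi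
      rw [Finset.mem_filter] at hi
      exact hdiff b hb b' hb' hbb' i hi.2
    have hle : (Finset.univ.filter (fun i => x b i = x b' i)).card ≤ t - 1 :=
      le_trans (Finset.card_le_card hsub) (hint b hb b' hb' hbb')
    have hsplit : (Finset.univ.filter (fun i => x b i = x b' i)).card
        + (Finset.univ.filter (fun i => ¬ x b i = x b' i)).card
        = (Finset.univ : Finset (Fin n)).card :=
      Finset.card_filter_add_card_filter_not (fun i => x b i = x b' i)
    rw [Finset.card_univ, Fintype.card_fin] at hsplit
    have : hammingDist (x b) (x b')
        = (Finset.univ.filter (fun i => ¬ x b i = x b' i)).card := rfl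
    rw [this]
    omega
  · -- supports' complements are the blocks
    rw [Finset.image_image]
    have : ∀ b ∈ B, (fun y => (suppN y)ᶜ) (x b) = b := by
      intro b hb
      simp [hsupp b, compl_compl]
    calc B.image ((fun y => (suppN y)ᶜ) ∘ x) = B.image id := Finset.image_congr this
      _ = B := Finset.image_id
end

section
/- Let 3 ≤ w < n and suppose a Steiner system S(3,w,n) exists. Then the smallest integer q for which an (n, C(n,3)/C(w,3), w, 2w−2)_q code exists equals 1 + min over all Steiner systems S of type S(3,w,n) on an n-element point set of ( max over the n points p of χ(D_p(S)) ), where D_p(S) is the S(2,w−1,n−1) derived from S at p and χ denotes the chromatic number of its minimum-distance graph. -/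
/-- An `(n, M, w, d)_q` constant-weight code. -/
def IsCWCode (n M w d q : ℕ) (C : Finset (Fin n → ℕ)) : Prop :=
  C.card = M ∧ (∀ x ∈ C, ∀ i, x i < q) ∧ (∀ x ∈ C, (suppN x).card = w) ∧
  ∀ x ∈ C, ∀ y ∈ C, x ≠ y → d ≤ hammingDist x y

/-- The block set of the system derived from `B` at the point `p`. -/
def derivedAt {n : ℕ} (B : Finset (Finset (Fin n))) (p : Fin n) :
    Finset (Finset (Fin n)) :=
  (B.filter (fun b => p ∈ b)).image (fun b => b.erase p)

/-- The minimum-distance graph of (the block set of) an `S(2,k',n')`: blocks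
are adjacent iff they intersect in exactly one point. -/
def mdGraph {n : ℕ} (D : Finset (Finset (Fin n))) :
    SimpleGraph {b : Finset (Fin n) // b ∈ D} where
  Adj a b := a ≠ b ∧ (a.val ∩ b.val).card = 1
  symm := ⟨fun a b h => ⟨h.1.symm, by rw [Finset.inter_comm]; exact h.2⟩⟩
  loopless := ⟨fun a h => h.1 rfl⟩

/-- The chromatic number (as a natural number) of a graph. -/
noncomputable def chromNum {V : Type*} (G : SimpleGraph V) : ℕ :=
  G.chromaticNumber.toNat

/-!
Words of weight `w` at distance at least `2w - 2` have distinct supports meeting in at most two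
points, and when they meet in exactly two points the words differ at both. So the supports of a
code of size `C(n,3)/C(w,3)` form an `S(3,w,n)` (they cover each triple at most once, and there
are exactly enough of them), and for every point `p` the entries at `p` properly colour the
minimum-distance graph of the system derived at `p` with the `q - 1` nonzero symbols.
Conversely, given colourings of all derived systems of an `S(3,w,n)` with `m` colours, the word
of a block `b` whose entry at `i ∈ b` is one plus the colour of `b \ {i}` at `i` gives a code
over `m + 1` symbols.
-/

open Finset

section Hamming

variable {n : ℕ}

def agreeOnSupp (x y : Fin n → ℕ) : Finset (Fin n) :=
  (suppN x ∩ suppN y).filter fun i => x i = y i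

lemma hammingDist_add_card_agreeOnSupp (x y : Fin n → ℕ) :
    hammingDist x y + (agreeOnSupp x y).card = (suppN x ∪ suppN y).card := by
  have hdisj : Disjoint (univ.filter fun i => x i ≠ y i) (agreeOnSupp x y) :=
    disjoint_left.2 fun i hi hi' => (mem_filter.1 hi).2 (mem_filter.1 hi').2
  rw [hammingDist, ← card_union_of_disjoint hdisj]
  congr 1
  ext i
  simp only [agreeOnSupp, suppN, mem_union, mem_filter, mem_inter, mem_univ, true_and]
  omega

lemma two_mul_sub_two_le_hammingDist_iff {w : ℕ} {x y : Fin n → ℕ}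
    (hx : (suppN x).card = w) (hy : (suppN y).card = w) :
    2 * w - 2 ≤ hammingDist x y ↔
      (suppN x ∩ suppN y).card + (agreeOnSupp x y).card ≤ 2 := by
  have hdist := hammingDist_add_card_agreeOnSupp x y
  have hunion := card_union_add_card_inter (suppN x) (suppN y)
  have hagree : (agreeOnSupp x y).card ≤ (suppN x ∩ suppN y).card := card_filter_le _ _
  omega

end Hamming

section Steiner

variable {n t k : ℕ} {B : Finset (Finset (Fin n))}

lemma IsSteiner.card_inter_lt (hB : IsSteiner t k B) {b b' : Finset (Fin n)}
    (hb : b ∈ B) (hb' : b' ∈ B) (hne : b ≠ b') : (b ∩ b').card < t := by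
  by_contra! h
  obtain ⟨s, hs, hst⟩ := exists_subset_card_eq h
  exact hne <| (hB.2 s hst).unique ⟨hb, hs.trans inter_subset_left⟩
    ⟨hb', hs.trans inter_subset_right⟩

lemma card_biUnion_powersetCard (hk : ∀ b ∈ B, b.card = k)
    (hint : ∀ b ∈ B, ∀ b' ∈ B, b ≠ b' → (b ∩ b').card < t) :
    (B.biUnion (powersetCard t)).card = B.card * k.choose t := by
  rw [card_biUnion, sum_congr rfl fun b hb => by rw [card_powersetCard, hk b hb], sum_const,
    smul_eq_mul]
  intro b hb b' hb' hne
  refine disjoint_left.2 fun s hs hs' => ?_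
  rw [mem_powersetCard] at hs hs'
  exact (hint b hb b' hb' hne).not_ge (hs.2 ▸ card_le_card (subset_inter hs.1 hs'.1))

lemma card_powersetCard_univ_fin (t : ℕ) :
    (powersetCard t (univ : Finset (Fin n))).card = n.choose t := by
  rw [card_powersetCard, card_univ, Fintype.card_fin]

lemma IsSteiner.card_mul_choose (hB : IsSteiner t k B) :
    B.card * k.choose t = n.choose t := by
  have hcover : B.biUnion (powersetCard t) = powersetCard t univ := by
    ext s
    simp only [mem_biUnion, mem_powersetCard, subset_univ, true_and]
    refine ⟨fun ⟨_, _, _, hs⟩ => hs, fun hs => ?_⟩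
    obtain ⟨b, ⟨hb, hsb⟩, -⟩ := hB.2 s hs
    exact ⟨b, hb, hsb, hs⟩
  rw [← card_biUnion_powersetCard hB.1 fun b hb b' hb' => hB.card_inter_lt hb hb', hcover,
    card_powersetCard_univ_fin]

lemma isSteiner_of_card_inter_lt (hk : ∀ b ∈ B, b.card = k)
    (hint : ∀ b ∈ B, ∀ b' ∈ B, b ≠ b' → (b ∩ b').card < t)
    (hcard : B.card * k.choose t = n.choose t) : IsSteiner t k B := by
  have hcover : B.biUnion (powersetCard t) = powersetCard t univ := by
    refine eq_of_subset_of_card_le (fun s hs => ?_) ?_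
    · obtain ⟨b, -, hsb⟩ := mem_biUnion.1 hs
      exact mem_powersetCard.2 ⟨subset_univ s, (mem_powersetCard.1 hsb).2⟩
    · rw [card_biUnion_powersetCard hk hint, hcard, card_powersetCard_univ_fin]
  refine ⟨hk, fun s hs => ?_⟩
  obtain ⟨b, hb, hsb⟩ := mem_biUnion.1 (hcover ▸ mem_powersetCard.2 ⟨subset_univ s, hs⟩)
  have hsb : s ⊆ b := (mem_powersetCard.1 hsb).1
  refine ⟨b, ⟨hb, hsb⟩, fun b' ⟨hb', hsb'⟩ => ?_⟩
  by_contra hne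
  exact (hint b' hb' b hb hne).not_ge (hs ▸ card_le_card (subset_inter hsb' hsb))

lemma mem_derivedAt {p : Fin n} {β : Finset (Fin n)} :
    β ∈ derivedAt B p ↔ p ∉ β ∧ insert p β ∈ B := by
  simp only [derivedAt, mem_image, mem_filter]
  constructor
  · rintro ⟨b, ⟨hb, hpb⟩, rfl⟩
    exact ⟨notMem_erase p b, by rwa [insert_erase hpb]⟩
  · rintro ⟨hpβ, hins⟩
    exact ⟨insert p β, ⟨hins, mem_insert_self p β⟩, erase_insert hpβ⟩

lemma erase_mem_derivedAt {p : Fin n} {b : Finset (Fin n)} (hb : b ∈ B) (hpb : p ∈ b) :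
    b.erase p ∈ derivedAt B p :=
  mem_image.2 ⟨b, mem_filter.2 ⟨hb, hpb⟩, rfl⟩

end Steiner

section Coloring

variable {V : Type*} {G : SimpleGraph V} {k : ℕ}

lemma chromNum_le_of_colorable (h : G.Colorable k) : chromNum G ≤ k :=
  ENat.toNat_le_of_le_natCast h.chromaticNumber_le

lemma colorable_of_chromNum_le [Finite V] (h : chromNum G ≤ k) : G.Colorable k :=
  G.colorable_chromaticNumber_of_fintype.mono h

end Coloring

section CodeOfColorings

variable {n m k : ℕ} {B : Finset (Finset (Fin n))}
  (c : ∀ p, (mdGraph (derivedAt B p)).Coloring (Fin m))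

def colorWord (b : Finset (Fin n)) (i : Fin n) : ℕ :=
  if h : b ∈ B ∧ i ∈ b then (c i ⟨b.erase i, erase_mem_derivedAt h.1 h.2⟩ : ℕ) + 1
  else 0

lemma colorWord_lt (b : Finset (Fin n)) (i : Fin n) : colorWord c b i < m + 1 := by
  unfold colorWord
  split_ifs
  · exact Nat.succ_lt_succ (Fin.isLt _)
  · exact Nat.succ_pos m

lemma suppN_colorWord {b : Finset (Fin n)} (hb : b ∈ B) : suppN (colorWord c b) = b := by
  ext i
  by_cases hi : i ∈ b <;> simp [suppN, colorWord, hb, hi]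

lemma colorWord_ne {b b' : Finset (Fin n)} (hb : b ∈ B) (hb' : b' ∈ B) (hne : b ≠ b')
    (h2 : (b ∩ b').card = 2) {i : Fin n} (hi : i ∈ b ∩ b') :
    colorWord c b i ≠ colorWord c b' i := by
  obtain ⟨hib, hib'⟩ := mem_inter.1 hi
  have hadj : (mdGraph (derivedAt B i)).Adj ⟨b.erase i, erase_mem_derivedAt hb hib⟩
      ⟨b'.erase i, erase_mem_derivedAt hb' hib'⟩ := by
    refine ⟨fun h => hne ?_, ?_⟩
    · simpa [insert_erase hib, insert_erase hib'] using congrArg (fun v => insert i v.1) h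
    · rw [erase_inter, inter_erase, erase_idem, card_erase_of_mem hi, h2]
  simp only [colorWord, dif_pos (And.intro hb hib), dif_pos (And.intro hb' hib'),
    Nat.add_right_cancel_iff, ne_eq, Fin.val_inj]
  exact (c i).valid hadj

lemma card_inter_add_card_agreeOnSupp_colorWord_le (hB : IsSteiner 3 k B)
    {b b' : Finset (Fin n)} (hb : b ∈ B) (hb' : b' ∈ B) (hne : b ≠ b') :
    (b ∩ b').card + (agreeOnSupp (colorWord c b) (colorWord c b')).card ≤ 2 := by
  have hagree : (agreeOnSupp (colorWord c b) (colorWord c b')).card ≤ (b ∩ b').card :=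
    (card_filter_le _ _).trans_eq (by rw [suppN_colorWord c hb, suppN_colorWord c hb'])
  have hlt := hB.card_inter_lt hb hb' hne
  by_cases h2 : (b ∩ b').card = 2
  · have hempty : agreeOnSupp (colorWord c b) (colorWord c b') = ∅ := by
      refine filter_eq_empty_iff.2 fun i hi => colorWord_ne c hb hb' hne h2 ?_
      rwa [suppN_colorWord c hb, suppN_colorWord c hb'] at hi
    rw [hempty, card_empty]
    omega
  · omega

end CodeOfColorings

theorem exists_isCWCode_of_colorable {n w m : ℕ} (hw : 3 ≤ w) {B : Finset (Finset (Fin n))}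
    (hB : IsSteiner 3 w B) (hcol : ∀ p, (mdGraph (derivedAt B p)).Colorable m) :
    ∃ C : Finset (Fin n → ℕ),
      IsCWCode n (n.choose 3 / w.choose 3) w (2 * w - 2) (m + 1) C := by
  let c := fun p => (hcol p).some
  have hinj : Set.InjOn (colorWord c) B := fun b hb b' hb' h => by
    rw [← suppN_colorWord c hb, ← suppN_colorWord c hb', h]
  have hwt (b) (hb : b ∈ B) : (suppN (colorWord c b)).card = w := by
    rw [suppN_colorWord c hb, hB.1 b hb]
  refine ⟨B.image (colorWord c), ?_, ?_, ?_, ?_⟩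
  · rw [card_image_of_injOn hinj, ← hB.card_mul_choose, Nat.mul_div_cancel _ (Nat.choose_pos hw)]
  · simpa only [forall_mem_image] using fun b _ => colorWord_lt c b
  · simpa only [forall_mem_image] using hwt
  · simp only [forall_mem_image]
    intro b hb b' hb' hne
    rw [two_mul_sub_two_le_hammingDist_iff (hwt b hb) (hwt b' hb'),
      suppN_colorWord c hb, suppN_colorWord c hb']
    exact card_inter_add_card_agreeOnSupp_colorWord_le c hB hb hb' fun h => hne (h ▸ rfl)

section CodeSupports

variable {n M w q : ℕ} {C : Finset (Fin n → ℕ)}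

lemma IsCWCode.card_inter_add_card_agreeOnSupp_le (hC : IsCWCode n M w (2 * w - 2) q C)
    {x y : Fin n → ℕ} (hx : x ∈ C) (hy : y ∈ C) (hne : x ≠ y) :
    (suppN x ∩ suppN y).card + (agreeOnSupp x y).card ≤ 2 :=
  (two_mul_sub_two_le_hammingDist_iff (hC.2.2.1 x hx) (hC.2.2.1 y hy)).1
    (hC.2.2.2 x hx y hy hne)

lemma IsCWCode.injOn_suppN (hw : 3 ≤ w) (hC : IsCWCode n M w (2 * w - 2) q C) :
    Set.InjOn suppN (C : Set (Fin n → ℕ)) := by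
  intro x hx y hy hxy
  by_contra hne
  have h := hC.card_inter_add_card_agreeOnSupp_le hx hy hne
  rw [hxy, inter_self, hC.2.2.1 y hy] at h
  omega

lemma IsCWCode.isSteiner_image_suppN (hw : 3 ≤ w) (hC : IsCWCode n M w (2 * w - 2) q C)
    (hM : M * w.choose 3 = n.choose 3) : IsSteiner 3 w (C.image suppN) := by
  refine isSteiner_of_card_inter_lt ?_ ?_ ?_
  · simpa only [forall_mem_image] using hC.2.2.1
  · simp only [forall_mem_image]
    intro x hx y hy hne
    have h := hC.card_inter_add_card_agreeOnSupp_le hx hy fun h => hne (h ▸ rfl)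
    omega
  · rw [card_image_of_injOn (hC.injOn_suppN hw), hC.1, hM]

lemma IsCWCode.colorable_mdGraph_derivedAt (hC : IsCWCode n M w (2 * w - 2) q C)
    (p : Fin n) :
    (mdGraph (derivedAt (C.image suppN) p)).Colorable (q - 1) := by
  have hword (v : {β // β ∈ derivedAt (C.image suppN) p}) :
      ∃ x ∈ C, suppN x = insert p v.1 :=
    mem_image.1 (mem_derivedAt.1 v.2).2
  choose x hxC hxsupp using hword
  have hxp (v) : x v p ≠ 0 := by
    have hp : p ∈ suppN (x v) := hxsupp v ▸ mem_insert_self p v.1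
    simpa [suppN] using hp
  refine ⟨SimpleGraph.Coloring.mk (fun v => ⟨x v p - 1, ?_⟩) fun {v v'} hadj heq => ?_⟩
  · have := hC.2.1 _ (hxC v) p
    have := hxp v
    omega
  have hne : x v ≠ x v' := fun h => hadj.1 <| Subtype.ext <| by
    rw [← erase_insert (mem_derivedAt.1 v.2).1, ← erase_insert (mem_derivedAt.1 v'.2).1,
      ← hxsupp, ← hxsupp, h]
  have hinter : suppN (x v) ∩ suppN (x v') = insert p (v.1 ∩ v'.1) := by
    rw [hxsupp, hxsupp, insert_inter_distrib]
  have hagree : p ∈ agreeOnSupp (x v) (x v') := by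
    have := hxp v
    have := hxp v'
    simp only [Fin.mk.injEq] at heq
    exact mem_filter.2 ⟨hinter ▸ mem_insert_self _ _, by omega⟩
  have hle := hC.card_inter_add_card_agreeOnSupp_le (hxC v) (hxC v') hne
  rw [hinter, card_insert_of_notMem fun h => (mem_derivedAt.1 v.2).1 (mem_inter.1 h).1,
    hadj.2] at hle
  have := card_pos.2 ⟨p, hagree⟩
  omega

lemma IsCWCode.pos {d : ℕ} (hC : IsCWCode n M w d q C) (hw : 0 < w) (hM : 0 < M) :
    0 < q := by
  obtain ⟨x, hx⟩ := card_pos.1 (hC.1 ▸ hM)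
  obtain ⟨i, hi⟩ := card_pos.1 ((hC.2.2.1 x hx).symm ▸ hw)
  exact Nat.zero_lt_of_lt (hC.2.1 x hx i)

end CodeSupports

/-- If an `S(3,w,n)` exists, the smallest `q` for which an
`(n, C(n,3)/C(w,3), w, 2w-2)_q` code exists equals `1` plus the minimum over
all `S(3,w,n)` systems `S` of the maximum over points `p` of the chromatic
number of the minimum-distance graph of the system derived from `S` at `p`. -/
theorem stmt_10 (n w : ℕ) (hw : 3 ≤ w) (hwn : w < n)
    (B0 : Finset (Finset (Fin n))) (hB0 : IsSteiner 3 w B0) :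
    IsLeast {q : ℕ | ∃ C : Finset (Fin n → ℕ),
        IsCWCode n (Nat.choose n 3 / Nat.choose w 3) w (2 * w - 2) q C}
      (sInf {m : ℕ | ∃ B : Finset (Finset (Fin n)), IsSteiner 3 w B ∧
          m = Finset.univ.sup (fun p : Fin n => chromNum (mdGraph (derivedAt B p)))}
        + 1) := by
  have hM : n.choose 3 / w.choose 3 * w.choose 3 = n.choose 3 := by
    rw [← hB0.card_mul_choose, Nat.mul_div_cancel _ (Nat.choose_pos hw)]
  set S := {m : ℕ | ∃ B : Finset (Finset (Fin n)), IsSteiner 3 w B ∧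
    m = Finset.univ.sup (fun p : Fin n => chromNum (mdGraph (derivedAt B p)))}
  refine ⟨?_, fun q ⟨C, hC⟩ => ?_⟩
  · obtain ⟨B, hB, hsup⟩ := Nat.sInf_mem (s := S) ⟨_, B0, hB0, rfl⟩
    exact exists_isCWCode_of_colorable hw hB fun p =>
      colorable_of_chromNum_le ((Finset.le_sup (Finset.mem_univ p)).trans_eq hsup.symm)
  · have hmin := Nat.sInf_le (s := S) ⟨_, hC.isSteiner_image_suppN hw hM, rfl⟩
    have hsup := Finset.sup_le (s := Finset.univ) fun p _ =>
      chromNum_le_of_colorable (hC.colorable_mdGraph_derivedAt p)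
    have hq := hC.pos (by omega)
      (Nat.div_pos (Nat.choose_le_choose 3 hwn.le) (Nat.choose_pos hw))
    omega
end

section
/- Let 3 ≤ w < n. If there exists a Steiner system S(3,w,n) such that for every point p the derived system S(2,w−1,n−1) at p is resolvable, then the smallest integer q for which an (n, C(n,3)/C(w,3), w, 2w−2)_q code exists equals (n−2)/(w−2) + 1. -/
/-- Resolvability of a block set `D` on a point set `pts`: the blocks can be
partitioned into parallel classes, each of which partitions `pts`. -/
def IsResolvable {n : ℕ} (pts : Finset (Fin n)) (D : Finset (Finset (Fin n))) :
    Prop :=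
  ∃ P : Finset (Finset (Finset (Fin n))),
    (∀ cl ∈ P, cl ⊆ D) ∧
    (∀ b ∈ D, ∃! cl, cl ∈ P ∧ b ∈ cl) ∧
    (∀ cl ∈ P, ∀ x ∈ pts, ∃! b, b ∈ cl ∧ x ∈ b)

/-! ### Auxiliary lemmas -/

/-- Pair-counting in an `S(3,w,n)`: the number of blocks through two fixed
distinct points, times `w-2`, equals `n-2`. -/
lemma lam2_mul {n w : ℕ} {B : Finset (Finset (Fin n))} (hB : IsSteiner 3 w B)
    {p x : Fin n} (hpx : p ≠ x) :
    (B.filter (fun β => p ∈ β ∧ x ∈ β)).card * (w - 2) = n - 2 := by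
  obtain ⟨hcard, huniq⟩ := hB
  set S := B.filter (fun β => p ∈ β ∧ x ∈ β) with hS
  have hY : ((Finset.univ.erase x).erase p : Finset (Fin n))
      = S.biUnion (fun β => (β.erase x).erase p) := by
    ext y
    simp only [Finset.mem_erase, Finset.mem_univ, and_true, Finset.mem_biUnion, hS,
      Finset.mem_filter]
    constructor
    · rintro ⟨hyp, hyx⟩
      have h3 : ({p, x, y} : Finset (Fin n)).card = 3 :=
        Finset.card_eq_three.mpr ⟨p, x, y, hpx, Ne.symm hyp, Ne.symm hyx, rfl⟩
      obtain ⟨β, ⟨hβB, hsub⟩, -⟩ := huniq _ h3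
      exact ⟨β, ⟨hβB, hsub (by simp), hsub (by simp)⟩, hyp, hyx, hsub (by simp)⟩
    · rintro ⟨β, -, hyp, hyx, -⟩
      exact ⟨hyp, hyx⟩
  have hdisj : ∀ β ∈ S, ∀ β' ∈ S, β ≠ β' →
      Disjoint ((β.erase x).erase p) ((β'.erase x).erase p) := by
    intro β hβ β' hβ' hne
    rw [Finset.disjoint_left]
    intro y hy hy'
    simp only [Finset.mem_erase] at hy hy'
    rw [hS, Finset.mem_filter] at hβ hβ'
    have h3 : ({p, x, y} : Finset (Fin n)).card = 3 :=
      Finset.card_eq_three.mpr ⟨p, x, y, hpx, Ne.symm hy.1, Ne.symm hy.2.1, rfl⟩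
    have hsub : ({p, x, y} : Finset (Fin n)) ⊆ β := by
      intro z hz
      simp only [Finset.mem_insert, Finset.mem_singleton] at hz
      rcases hz with rfl | rfl | rfl
      exacts [hβ.2.1, hβ.2.2, hy.2.2]
    have hsub' : ({p, x, y} : Finset (Fin n)) ⊆ β' := by
      intro z hz
      simp only [Finset.mem_insert, Finset.mem_singleton] at hz
      rcases hz with rfl | rfl | rfl
      exacts [hβ'.2.1, hβ'.2.2, hy'.2.2]
    exact hne ((huniq _ h3).unique ⟨hβ.1, hsub⟩ ⟨hβ'.1, hsub'⟩)
  have hYcard : ((Finset.univ.erase x).erase p : Finset (Fin n)).card = n - 2 := by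
    rw [Finset.card_erase_of_mem (Finset.mem_erase.mpr ⟨hpx, Finset.mem_univ p⟩),
      Finset.card_erase_of_mem (Finset.mem_univ x), Finset.card_univ, Fintype.card_fin]
    omega
  have hpiece : ∀ β ∈ S, ((β.erase x).erase p).card = w - 2 := by
    intro β hβ
    rw [hS, Finset.mem_filter] at hβ
    rw [Finset.card_erase_of_mem (Finset.mem_erase.mpr ⟨hpx, hβ.2.1⟩),
      Finset.card_erase_of_mem hβ.2.2, hcard β hβ.1]
    omega
  calc S.card * (w - 2) = ∑ β ∈ S, ((β.erase x).erase p).card := by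
        rw [Finset.sum_congr rfl hpiece, Finset.sum_const, smul_eq_mul]
    _ = (S.biUnion (fun β => (β.erase x).erase p)).card := (Finset.card_biUnion hdisj).symm
    _ = n - 2 := by rw [← hY, hYcard]

/-- Triple-counting: the number of blocks of an `S(3,w,n)` times `C(w,3)`
equals `C(n,3)`. -/
lemma blocks_mul {n w : ℕ} {B : Finset (Finset (Fin n))} (hB : IsSteiner 3 w B) :
    B.card * Nat.choose w 3 = Nat.choose n 3 := by
  obtain ⟨hcard, huniq⟩ := hB
  have hU : (Finset.univ : Finset (Fin n)).powersetCard 3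
      = B.biUnion (fun β => β.powersetCard 3) := by
    ext s
    simp only [Finset.mem_powersetCard, Finset.mem_biUnion]
    constructor
    · rintro ⟨-, hs3⟩
      obtain ⟨β, ⟨hβ, hsub⟩, -⟩ := huniq s hs3
      exact ⟨β, hβ, hsub, hs3⟩
    · rintro ⟨β, hβ, hsub, hs3⟩
      exact ⟨Finset.subset_univ _, hs3⟩
  have hdisj : ∀ β ∈ B, ∀ β' ∈ B, β ≠ β' →
      Disjoint (β.powersetCard 3) (β'.powersetCard 3) := by
    intro β hβ β' hβ' hne
    rw [Finset.disjoint_left]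
    intro s hs hs'
    rw [Finset.mem_powersetCard] at hs hs'
    exact hne ((huniq s hs.2).unique ⟨hβ, hs.1⟩ ⟨hβ', hs'.1⟩)
  calc B.card * Nat.choose w 3 = ∑ β ∈ B, (β.powersetCard 3).card := by
        rw [Finset.sum_congr rfl
          (fun β hβ => by rw [Finset.card_powersetCard, hcard β hβ]),
          Finset.sum_const, smul_eq_mul]
    _ = (B.biUnion (fun β => β.powersetCard 3)).card := (Finset.card_biUnion hdisj).symm
    _ = Nat.choose n 3 := by
        rw [← hU, Finset.card_powersetCard, Finset.card_univ, Fintype.card_fin]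

/-- Arithmetic bridge between the block count and the replication number. -/
lemma arith_bridge {n w M r : ℕ} (hw : 3 ≤ w)
    (h1 : M * Nat.choose w 3 = Nat.choose n 3) (h2 : r * (w - 2) = n - 2) :
    M * Nat.choose w 2 = Nat.choose n 2 * r := by
  have e1 : Nat.choose w 3 * 3 = Nat.choose w 2 * (w - 2) := Nat.choose_succ_right_eq w 2
  have e2 : Nat.choose n 3 * 3 = Nat.choose n 2 * (n - 2) := Nat.choose_succ_right_eq n 2
  have key : (M * Nat.choose w 2) * ((w - 2) * 3) = (Nat.choose n 2 * r) * ((w - 2) * 3) := by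
    calc (M * Nat.choose w 2) * ((w - 2) * 3)
        = M * (Nat.choose w 2 * (w - 2)) * 3 := by ring
      _ = M * (Nat.choose w 3 * 3) * 3 := by rw [e1]
      _ = (M * Nat.choose w 3) * 9 := by ring
      _ = Nat.choose n 3 * 9 := by rw [h1]
      _ = (Nat.choose n 3 * 3) * 3 := by ring
      _ = Nat.choose n 2 * (n - 2) * 3 := by rw [e2]
      _ = Nat.choose n 2 * (r * (w - 2)) * 3 := by rw [h2]
      _ = (Nat.choose n 2 * r) * ((w - 2) * 3) := by ring
  exact Nat.eq_of_mul_eq_mul_right (by omega) key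

/-- The color of a block `β` at a point `p`: one plus the index of the parallel
class (in `P p`) containing the derived block `β.erase p`. -/
noncomputable def pcIdx {n : ℕ} (P : Fin n → Finset (Finset (Finset (Fin n))))
    (β : Finset (Fin n)) (p : Fin n) : ℕ :=
  if h : ∃ cl, cl ∈ P p ∧ β.erase p ∈ cl then
    ((P p).equivFin ⟨h.choose, h.choose_spec.1⟩ : Fin (P p).card).val + 1
  else 0

lemma pcIdx_pos {n : ℕ} {P : Fin n → Finset (Finset (Finset (Fin n)))}
    {β : Finset (Fin n)} {p : Fin n} (h : ∃ cl, cl ∈ P p ∧ β.erase p ∈ cl) :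
    pcIdx P β p ≠ 0 := by
  rw [pcIdx, dif_pos h]
  omega

lemma pcIdx_le {n : ℕ} (P : Fin n → Finset (Finset (Finset (Fin n))))
    (β : Finset (Fin n)) (p : Fin n) : pcIdx P β p ≤ (P p).card := by
  rw [pcIdx]
  split
  · next h => exact Nat.succ_le_of_lt (((P p).equivFin ⟨h.choose, h.choose_spec.1⟩).isLt)
  · exact Nat.zero_le _

lemma pcIdx_eq_imp {n : ℕ} {P : Fin n → Finset (Finset (Finset (Fin n)))}
    {β β' : Finset (Fin n)} {p : Fin n}
    (h1 : ∃ cl, cl ∈ P p ∧ β.erase p ∈ cl) (h2 : ∃ cl, cl ∈ P p ∧ β'.erase p ∈ cl)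
    (heq : pcIdx P β p = pcIdx P β' p) :
    ∃ cl, cl ∈ P p ∧ β.erase p ∈ cl ∧ β'.erase p ∈ cl := by
  rw [pcIdx, pcIdx, dif_pos h1, dif_pos h2] at heq
  have hv : ((P p).equivFin ⟨h1.choose, h1.choose_spec.1⟩ : Fin (P p).card)
      = ((P p).equivFin ⟨h2.choose, h2.choose_spec.1⟩ : Fin (P p).card) :=
    Fin.ext (by omega)
  have := ((P p).equivFin).injective hv
  have hcl : h1.choose = h2.choose := congrArg Subtype.val this
  exact ⟨h1.choose, h1.choose_spec.1, h1.choose_spec.2, hcl ▸ h2.choose_spec.2⟩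

noncomputable def cwF {n : ℕ} (P : Fin n → Finset (Finset (Finset (Fin n))))
    (β : Finset (Fin n)) : Fin n → ℕ :=
  fun i => if i ∈ β then pcIdx P β i else 0

/-- If there is an `S(3,w,n)` all of whose derived `S(2,w-1,n-1)` systems are
resolvable, then the smallest `q` for which an
`(n, C(n,3)/C(w,3), w, 2w-2)_q` code exists equals `(n-2)/(w-2) + 1`. -/
theorem stmt_11 (n w : ℕ) (hw : 3 ≤ w) (hwn : w < n)
    (B : Finset (Finset (Fin n))) (hB : IsSteiner 3 w B)
    (hres : ∀ p : Fin n, IsResolvable (Finset.univ.erase p) (derivedAt B p)) :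
    IsLeast {q : ℕ | ∃ C : Finset (Fin n → ℕ),
        IsCWCode n (Nat.choose n 3 / Nat.choose w 3) w (2 * w - 2) q C}
      ((n - 2) / (w - 2) + 1) := by
  classical
  have hn4 : 4 ≤ n := by omega
  set M := Nat.choose n 3 / Nat.choose w 3 with hM
  set r := (n - 2) / (w - 2) with hrdef
  have hBM : B.card * Nat.choose w 3 = Nat.choose n 3 := blocks_mul hB
  have hw3pos : 0 < Nat.choose w 3 := Nat.choose_pos hw
  have hMB : M = B.card := by
    rw [hM]; exact Nat.div_eq_of_eq_mul_left hw3pos hBM.symm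
  have h01 : (⟨0, by omega⟩ : Fin n) ≠ ⟨1, by omega⟩ := by simp [Fin.ext_iff]
  have hr : r * (w - 2) = n - 2 := by
    have hl := lam2_mul hB h01
    have hdvd : (w - 2) ∣ (n - 2) := ⟨_, by rw [← hl, mul_comm]⟩
    rw [hrdef]; exact Nat.div_mul_cancel hdvd
  have hlam : ∀ p x : Fin n, p ≠ x →
      (B.filter (fun β => p ∈ β ∧ x ∈ β)).card = r := by
    intro p x hpx
    have h := lam2_mul hB hpx
    have h2 : (B.filter (fun β => p ∈ β ∧ x ∈ β)).card * (w - 2) = r * (w - 2) := by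
      rw [h, hr]
    exact Nat.eq_of_mul_eq_mul_right (by omega) h2
  choose P hP using hres
  have hex : ∀ β ∈ B, ∀ p ∈ β, ∃ cl, cl ∈ P p ∧ β.erase p ∈ cl := by
    intro β hβ p hp
    have hd : β.erase p ∈ derivedAt B p :=
      Finset.mem_image.mpr ⟨β, Finset.mem_filter.mpr ⟨hβ, hp⟩, rfl⟩
    exact ((hP p).2.1 _ hd).exists
  -- each parallel-class family has at most r classes
  have hPcard : ∀ p : Fin n, (P p).card ≤ r := by
    intro p
    haveI : Nontrivial (Fin n) :=
      ⟨⟨⟨0, by omega⟩, ⟨1, by omega⟩, by simp [Fin.ext_iff]⟩⟩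
    obtain ⟨x, hxp⟩ := exists_ne p
    have hxpts : x ∈ Finset.univ.erase p := Finset.mem_erase.mpr ⟨hxp, Finset.mem_univ x⟩
    have hle : (P p).card ≤ ((derivedAt B p).filter (fun b => x ∈ b)).card := by
      apply Finset.card_le_card_of_injOn
        (fun cl => if h : ∃ b, b ∈ cl ∧ x ∈ b then h.choose else ∅)
      · intro cl hcl
        have hb : ∃ b, b ∈ cl ∧ x ∈ b := ((hP p).2.2 cl hcl x hxpts).exists
        simp only [dif_pos hb]
        exact Finset.mem_filter.mpr
          ⟨(hP p).1 cl hcl hb.choose_spec.1, hb.choose_spec.2⟩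
      · intro cl hcl cl' hcl' heq
        have hb : ∃ b, b ∈ cl ∧ x ∈ b := ((hP p).2.2 cl hcl x hxpts).exists
        have hb' : ∃ b, b ∈ cl' ∧ x ∈ b := ((hP p).2.2 cl' hcl' x hxpts).exists
        dsimp only at heq
        rw [dif_pos hb, dif_pos hb'] at heq
        have hmem : hb.choose ∈ derivedAt B p := (hP p).1 cl hcl hb.choose_spec.1
        refine ((hP p).2.1 _ hmem).unique ⟨hcl, hb.choose_spec.1⟩ ⟨hcl', ?_⟩
        rw [heq]; exact hb'.choose_spec.1
    have hDcard : ((derivedAt B p).filter (fun b => x ∈ b)).card = r := by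
      have himg : (derivedAt B p).filter (fun b => x ∈ b)
          = (B.filter (fun β => p ∈ β ∧ x ∈ β)).image (fun β => β.erase p) := by
        ext b
        simp only [Finset.mem_filter, derivedAt, Finset.mem_image]
        constructor
        · rintro ⟨⟨β, ⟨hβB, hpβ⟩, rfl⟩, hxb⟩
          exact ⟨β, ⟨hβB, hpβ, (Finset.mem_erase.mp hxb).2⟩, rfl⟩
        · rintro ⟨β, ⟨hβB, hpβ, hxβ⟩, rfl⟩
          exact ⟨⟨β, ⟨hβB, hpβ⟩, rfl⟩, Finset.mem_erase.mpr ⟨hxp, hxβ⟩⟩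
      rw [himg, Finset.card_image_of_injOn, hlam p x (Ne.symm hxp)]
      intro β hβ β' hβ' he
      rw [Finset.mem_coe, Finset.mem_filter] at hβ hβ'
      dsimp only at he
      rw [← Finset.insert_erase hβ.2.1, he, Finset.insert_erase hβ'.2.1]
    exact le_of_le_of_eq hle hDcard
  -- the code
  set C := B.image (cwF P) with hCdef
  have hsupp : ∀ β ∈ B, suppN (cwF P β) = β := by
    intro β hβ
    ext i
    simp only [suppN, Finset.mem_filter, Finset.mem_univ, true_and]
    simp only [cwF]
    by_cases hi : i ∈ β
    · simp only [if_pos hi]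
      exact ⟨fun _ => hi, fun _ => pcIdx_pos (hex β hβ i hi)⟩
    · simp [if_neg hi, hi]
  have hinj : Set.InjOn (cwF P) B := by
    intro β hβ β' hβ' he
    rw [← hsupp β hβ, ← hsupp β' hβ', he]
  have hCcard : C.card = M := by
    rw [hCdef, Finset.card_image_of_injOn hinj, hMB]
  have hint : ∀ β ∈ B, ∀ β' ∈ B, β ≠ β' → (β ∩ β').card ≤ 2 := by
    intro β hβ β' hβ' hne
    by_contra h
    push_neg at h
    obtain ⟨t, hts, ht3⟩ := Finset.exists_subset_card_eq (show 3 ≤ (β ∩ β').card by omega)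
    exact hne ((hB.2 t ht3).unique
      ⟨hβ, hts.trans Finset.inter_subset_left⟩
      ⟨hβ', hts.trans Finset.inter_subset_right⟩)
  have hdist : ∀ β ∈ B, ∀ β' ∈ B, β ≠ β' →
      2 * w - 2 ≤ hammingDist (cwF P β) (cwF P β') := by
    intro β hβ β' hβ' hne
    have hcβ : β.card = w := hB.1 β hβ
    have hcβ' : β'.card = w := hB.1 β' hβ'
    have hsle : (β ∩ β').card ≤ 2 := hint β hβ β' hβ' hne
    have hsw : (β ∩ β').card ≤ w := hcβ ▸ Finset.card_le_card Finset.inter_subset_left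
    have hsd : β \ β' ∪ β' \ β ⊆
        Finset.univ.filter (fun i => cwF P β i ≠ cwF P β' i) := by
      intro i hi
      simp only [Finset.mem_union, Finset.mem_sdiff] at hi
      rw [Finset.mem_filter]
      simp only [Finset.mem_univ, true_and, cwF]
      rcases hi with ⟨h1, h2⟩ | ⟨h1, h2⟩
      · rw [if_pos h1, if_neg h2]
        exact pcIdx_pos (hex β hβ i h1)
      · rw [if_neg h2, if_pos h1]
        exact Ne.symm (pcIdx_pos (hex β' hβ' i h1))
    have hdisj2 : Disjoint (β \ β') (β' \ β) := by
      rw [Finset.disjoint_left]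
      intro a ha ha'
      exact (Finset.mem_sdiff.mp ha).2 (Finset.mem_sdiff.mp ha').1
    have hcard1 : (β \ β').card = w - (β ∩ β').card := by
      rw [← Finset.sdiff_inter_self_left β β',
        Finset.card_sdiff_of_subset Finset.inter_subset_left, hcβ]
    have hcard2 : (β' \ β).card = w - (β ∩ β').card := by
      rw [← Finset.sdiff_inter_self_left β' β,
        Finset.card_sdiff_of_subset Finset.inter_subset_left, hcβ', Finset.inter_comm]
    have hcardU : (β \ β' ∪ β' \ β).card
        = (w - (β ∩ β').card) + (w - (β ∩ β').card) := by
      rw [Finset.card_union_of_disjoint hdisj2, hcard1, hcard2]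
    by_cases hs2 : (β ∩ β').card ≤ 1
    · refine le_trans ?_ (Finset.card_le_card hsd)
      omega
    · have hs2' : (β ∩ β').card = 2 := by omega
      obtain ⟨p, x0, hpx0, hpair⟩ := Finset.card_eq_two.mp hs2'
      have hpmem : p ∈ β ∩ β' := by rw [hpair]; simp
      have hx0mem : x0 ∈ β ∩ β' := by rw [hpair]; simp
      obtain ⟨hpβ, hpβ'⟩ := Finset.mem_inter.mp hpmem
      obtain ⟨hx0β, hx0β'⟩ := Finset.mem_inter.mp hx0mem
      have hkey : ∀ a b : Fin n, a ∈ β ∩ β' → b ∈ β ∩ β' → b ≠ a →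
          pcIdx P β a ≠ pcIdx P β' a := by
        intro a b ha hb hba heq
        obtain ⟨ha1, ha2⟩ := Finset.mem_inter.mp ha
        obtain ⟨hb1, hb2⟩ := Finset.mem_inter.mp hb
        obtain ⟨cl, hclP, hm1, hm2⟩ :=
          pcIdx_eq_imp (hex β hβ a ha1) (hex β' hβ' a ha2) heq
        have hbpts : b ∈ Finset.univ.erase a :=
          Finset.mem_erase.mpr ⟨hba, Finset.mem_univ b⟩
        have herase : β.erase a = β'.erase a :=
          ((hP a).2.2 cl hclP b hbpts).unique
            ⟨hm1, Finset.mem_erase.mpr ⟨hba, hb1⟩⟩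
            ⟨hm2, Finset.mem_erase.mpr ⟨hba, hb2⟩⟩
        apply hne
        rw [← Finset.insert_erase ha1, herase, Finset.insert_erase ha2]
      have hd1 : cwF P β p ≠ cwF P β' p := by
        simp only [cwF, if_pos hpβ, if_pos hpβ']
        exact hkey p x0 hpmem hx0mem (Ne.symm hpx0)
      have hd2 : cwF P β x0 ≠ cwF P β' x0 := by
        simp only [cwF, if_pos hx0β, if_pos hx0β']
        exact hkey x0 p hx0mem hpmem hpx0
      have hsubset : insert p (insert x0 (β \ β' ∪ β' \ β)) ⊆
          Finset.univ.filter (fun i => cwF P β i ≠ cwF P β' i) := by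
        intro i hi
        rcases Finset.mem_insert.mp hi with rfl | hi
        · exact Finset.mem_filter.mpr ⟨Finset.mem_univ _, hd1⟩
        · rcases Finset.mem_insert.mp hi with rfl | hi
          · exact Finset.mem_filter.mpr ⟨Finset.mem_univ _, hd2⟩
          · exact hsd hi
      have hx0ni : x0 ∉ β \ β' ∪ β' \ β := by
        intro h
        rcases Finset.mem_union.mp h with h | h
        · exact (Finset.mem_sdiff.mp h).2 hx0β'
        · exact (Finset.mem_sdiff.mp h).2 hx0β
      have hpni : p ∉ insert x0 (β \ β' ∪ β' \ β) := by
        intro h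
        rcases Finset.mem_insert.mp h with rfl | h
        · exact hpx0 rfl
        · rcases Finset.mem_union.mp h with h | h
          · exact (Finset.mem_sdiff.mp h).2 hpβ'
          · exact (Finset.mem_sdiff.mp h).2 hpβ
      have hcardA : (insert p (insert x0 (β \ β' ∪ β' \ β))).card
          = (β \ β' ∪ β' \ β).card + 2 := by
        rw [Finset.card_insert_of_notMem hpni, Finset.card_insert_of_notMem hx0ni]
      refine le_trans ?_ (Finset.card_le_card hsubset)
      omega
  -- membership
  have hmem : (r + 1) ∈ {q : ℕ | ∃ C : Finset (Fin n → ℕ),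
      IsCWCode n M w (2 * w - 2) q C} := by
    refine ⟨C, hCcard, ?_, ?_, ?_⟩
    · intro x hx i
      obtain ⟨β, hβ, rfl⟩ := Finset.mem_image.mp hx
      by_cases hi : i ∈ β
      · have h1 : pcIdx P β i ≤ (P i).card := pcIdx_le P β i
        have h2 := hPcard i
        simp only [cwF, if_pos hi]
        exact Nat.lt_succ_of_le (h1.trans h2)
      · simp only [cwF, if_neg hi]
        exact Nat.succ_pos r
    · intro x hx
      obtain ⟨β, hβ, rfl⟩ := Finset.mem_image.mp hx
      rw [hsupp β hβ]
      exact hB.1 β hβ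
    · intro x hx y hy hne
      obtain ⟨β, hβ, rfl⟩ := Finset.mem_image.mp hx
      obtain ⟨β', hβ', rfl⟩ := Finset.mem_image.mp hy
      exact hdist β hβ β' hβ' (fun h => hne (h ▸ rfl))
  refine ⟨hmem, ?_⟩
  -- lower bound
  rintro q ⟨C', hC1, hC2, hC3, hC4⟩
  have hn3pos : 0 < Nat.choose n 3 := Nat.choose_pos (by omega)
  have hMpos : 0 < M := by
    rw [hMB]
    rcases Nat.eq_zero_or_pos B.card with h0 | h0
    · rw [h0, zero_mul] at hBM; omega
    · exact h0
  have hq1 : 1 ≤ q := by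
    obtain ⟨x, hx⟩ := Finset.card_pos.mp (show 0 < C'.card by omega)
    have := hC2 x hx ⟨0, by omega⟩
    omega
  have hpair : ∀ s ∈ (Finset.univ : Finset (Fin n)).powersetCard 2,
      (C'.filter (fun x => s ⊆ suppN x)).card ≤ q - 1 := by
    intro s hs
    have hs2 : s.card = 2 := (Finset.mem_powersetCard.mp hs).2
    obtain ⟨i, j, hij, rfl⟩ := Finset.card_eq_two.mp hs2
    have hle : (C'.filter (fun x => ({i, j} : Finset (Fin n)) ⊆ suppN x)).card
        ≤ (Finset.Ioo 0 q).card := by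
      apply Finset.card_le_card_of_injOn (fun x => x i)
      · intro x hx
        rw [Finset.mem_coe, Finset.mem_filter] at hx
        have hi : i ∈ suppN x := hx.2 (by simp)
        have hne : x i ≠ 0 := (Finset.mem_filter.mp hi).2
        exact Finset.mem_Ioo.mpr ⟨Nat.pos_of_ne_zero hne, hC2 x hx.1 i⟩
      · intro x hx y hy heq
        simp only [Finset.coe_filter, Set.mem_setOf_eq] at hx hy
        by_contra hne
        have hdxy := hC4 x hx.1 y hy.1 hne
        have hix : i ∈ suppN x := hx.2 (by simp)
        have hjx : j ∈ suppN x := hx.2 (by simp)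
        have hiy : i ∈ suppN y := hy.2 (by simp)
        have hjy : j ∈ suppN y := hy.2 (by simp)
        have hsub : (Finset.univ.filter fun k => x k ≠ y k)
            ⊆ (suppN x ∪ suppN y).erase i := by
          intro k hk
          rw [Finset.mem_filter] at hk
          refine Finset.mem_erase.mpr ⟨?_, ?_⟩
          · rintro rfl; exact hk.2 heq
          · by_contra hku
            rw [Finset.mem_union] at hku
            push_neg at hku
            have h1 : x k = 0 := by
              by_contra h
              exact hku.1 (Finset.mem_filter.mpr ⟨Finset.mem_univ _, h⟩)
            have h2 : y k = 0 := by
              by_contra h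
              exact hku.2 (Finset.mem_filter.mpr ⟨Finset.mem_univ _, h⟩)
            exact hk.2 (h1.trans h2.symm)
        have hiU : i ∈ suppN x ∪ suppN y := Finset.mem_union_left _ hix
        have hUc : (suppN x ∪ suppN y).card + (suppN x ∩ suppN y).card = w + w := by
          rw [Finset.card_union_add_card_inter, hC3 x hx.1, hC3 y hy.1]
        have hIc : 2 ≤ (suppN x ∩ suppN y).card := by
          have hss : ({i, j} : Finset (Fin n)) ⊆ suppN x ∩ suppN y := by
            intro z hz
            rcases Finset.mem_insert.mp hz with rfl | hz
            · exact Finset.mem_inter.mpr ⟨hix, hiy⟩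
            · rw [Finset.mem_singleton] at hz
              subst hz
              exact Finset.mem_inter.mpr ⟨hjx, hjy⟩
          calc 2 = ({i, j} : Finset (Fin n)).card :=
                (Finset.card_eq_two.mpr ⟨i, j, hij, rfl⟩).symm
            _ ≤ _ := Finset.card_le_card hss
        have hdle : hammingDist x y ≤ (suppN x ∪ suppN y).card - 1 := by
          calc hammingDist x y ≤ ((suppN x ∪ suppN y).erase i).card :=
                Finset.card_le_card hsub
            _ = _ := Finset.card_erase_of_mem hiU
        have h5 : 2 * w - 2 ≤ (suppN x ∪ suppN y).card - 1 := hdxy.trans hdle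
        clear * - hUc hIc hw h5
        omega
    rw [Nat.card_Ioo] at hle
    omega
  have hsum : ∑ s ∈ (Finset.univ : Finset (Fin n)).powersetCard 2,
      (C'.filter (fun x => s ⊆ suppN x)).card = M * Nat.choose w 2 := by
    have hcf : ∀ s : Finset (Fin n), (C'.filter (fun x => s ⊆ suppN x)).card
        = ∑ x ∈ C', if s ⊆ suppN x then 1 else 0 := fun s => Finset.card_filter _ _
    have inner : ∀ x ∈ C',
        (∑ s ∈ (Finset.univ : Finset (Fin n)).powersetCard 2,
          if s ⊆ suppN x then 1 else 0) = Nat.choose w 2 := by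
      intro x hx
      have hfe : ((Finset.univ : Finset (Fin n)).powersetCard 2).filter
          (fun s => s ⊆ suppN x) = (suppN x).powersetCard 2 := by
        ext s
        simp only [Finset.mem_filter, Finset.mem_powersetCard]
        constructor
        · rintro ⟨⟨-, h2⟩, hsub⟩
          exact ⟨hsub, h2⟩
        · rintro ⟨hsub, h2⟩
          exact ⟨⟨Finset.subset_univ _, h2⟩, hsub⟩
      rw [← Finset.card_filter, hfe, Finset.card_powersetCard, hC3 x hx]
    calc ∑ s ∈ (Finset.univ : Finset (Fin n)).powersetCard 2,
        (C'.filter (fun x => s ⊆ suppN x)).card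
        = ∑ s ∈ (Finset.univ : Finset (Fin n)).powersetCard 2,
            ∑ x ∈ C', if s ⊆ suppN x then 1 else 0 :=
          Finset.sum_congr rfl (fun s _ => hcf s)
      _ = ∑ x ∈ C', ∑ s ∈ (Finset.univ : Finset (Fin n)).powersetCard 2,
            if s ⊆ suppN x then 1 else 0 := Finset.sum_comm
      _ = ∑ _x ∈ C', Nat.choose w 2 := Finset.sum_congr rfl inner
      _ = M * Nat.choose w 2 := by rw [Finset.sum_const, smul_eq_mul, hC1]
  have hbound : M * Nat.choose w 2 ≤ Nat.choose n 2 * (q - 1) := by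
    rw [← hsum]
    have hsle := Finset.sum_le_card_nsmul _ _ _ hpair
    rw [smul_eq_mul] at hsle
    calc _ ≤ ((Finset.univ : Finset (Fin n)).powersetCard 2).card * (q - 1) := hsle
      _ = Nat.choose n 2 * (q - 1) := by
          rw [Finset.card_powersetCard, Finset.card_univ, Fintype.card_fin]
  have hM3 : M * Nat.choose w 3 = Nat.choose n 3 := by rw [hMB]; exact hBM
  have hMr : M * Nat.choose w 2 = Nat.choose n 2 * r := arith_bridge hw hM3 hr
  have hfin : Nat.choose n 2 * r ≤ Nat.choose n 2 * (q - 1) := hMr ▸ hbound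
  have hn2pos : 0 < Nat.choose n 2 := Nat.choose_pos (by omega)
  have hrq := Nat.le_of_mul_le_mul_left hfin hn2pos
  calc r + 1 ≤ (q - 1) + 1 := Nat.succ_le_succ hrq
    _ = q := Nat.succ_pred_eq_of_pos hq1
end

section
/- Let 3 ≤ t ≤ w < n and suppose a Steiner system S(t,w,n) exists. Then the smallest integer q for which an (n, C(n,t)/C(w,t), w, 2w−t+1)_q code exists is at most C(n−1,t−1)/C(w−1,t−1) − C(n−t+2,2)/C(w−t+2,2) + 1 + min over all Steiner systems S of type S(t,w,n) on an n-element point set of ( max over all (t−2)-element subsets α of the points of χ(D_α(S)) ), where D_α(S) is the S(2,w−t+2,n−t+2) derived from S at α and χ denotes the chromatic number of its minimum-distance graph. -/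
/-- The block set of the system derived from `B` at the point set `α`. -/
def derivedBlocks {n : ℕ} (B : Finset (Finset (Fin n))) (α : Finset (Fin n)) :
    Finset (Finset (Fin n)) :=
  (B.filter (fun b => α ⊆ b)).image (fun b => b \ α)

/-!
Fix an `S(t, w, n)` with blocks `B` and an injective choice `p ↦ A p` of `(t - 2)`-sets with
`p ∈ A p` (cyclic windows). A block `b` becomes the word that vanishes off `b` and at `p ∈ b`
records either, if `A p ⊆ b`, the colour of `b \ A p` in an optimal colouring of the
minimum-distance graph of the system derived at `A p`, or else the position of `b` among the
`C(n-1,t-1)/C(w-1,t-1) - C(n-t+2,2)/C(w-t+2,2)` blocks through `p` not containing `A p`.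
Distinct blocks meet in at most `t - 1` points, and they can agree at a common point `p` only if
they meet exactly in `A p`: equal colours mean the derived blocks meet in `0 ≠ 1` points. By
injectivity of `A` this happens at most once, so the words are at distance `≥ 2w - t + 1`.
-/

open Finset

section MinDistColoring

variable {n : ℕ} (D : Finset (Finset (Fin n)))

noncomputable def mdColoring (d : Finset (Fin n)) : ℕ :=
  if h : d ∈ D then ((mdGraph D).colorable_chromaticNumber_of_fintype.some ⟨d, h⟩ : ℕ) else 0

variable {D}

lemma mdColoring_lt {d : Finset (Fin n)} (hd : d ∈ D) :
    mdColoring D d < chromNum (mdGraph D) := by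
  rw [mdColoring, dif_pos hd]
  exact Fin.isLt _

lemma mdColoring_ne {d d' : Finset (Fin n)} (hd : d ∈ D) (hd' : d' ∈ D) (hne : d ≠ d')
    (hcard : #(d ∩ d') = 1) : mdColoring D d ≠ mdColoring D d' := by
  rw [mdColoring, mdColoring, dif_pos hd, dif_pos hd']
  have hadj : (mdGraph D).Adj ⟨d, hd⟩ ⟨d', hd'⟩ :=
    ⟨fun h => hne (congrArg Subtype.val h), hcard⟩
  exact fun h => (mdGraph D).colorable_chromaticNumber_of_fintype.some.valid hadj (Fin.ext h)

end MinDistColoring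

lemma sdiff_mem_derivedBlocks {n : ℕ} {B : Finset (Finset (Fin n))} {α b : Finset (Fin n)}
    (hb : b ∈ B) (hα : α ⊆ b) : b \ α ∈ derivedBlocks B α :=
  mem_image_of_mem _ (mem_filter.mpr ⟨hb, hα⟩)

namespace IsSteiner

variable {n t w : ℕ} {B : Finset (Finset (Fin n))}

lemma card_inter_lt_s12 (hB : IsSteiner t w B) {b b' : Finset (Fin n)} (hb : b ∈ B) (hb' : b' ∈ B)
    (hne : b ≠ b') : #(b ∩ b') < t := by
  by_contra! h
  obtain ⟨s, hs, hcard⟩ := exists_subset_card_eq h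
  obtain ⟨u, -, huniq⟩ := hB.2 s hcard
  exact hne ((huniq b ⟨hb, hs.trans inter_subset_left⟩).trans
    (huniq b' ⟨hb', hs.trans inter_subset_right⟩).symm)

/-- Double counting the pairs `(s, b)` with `A ⊆ s ⊆ b`, `#s = t`, `b ∈ B`. -/
lemma card_filter_superset_mul (hB : IsSteiner t w B) {A : Finset (Fin n)} (hA : #A ≤ t) :
    #{b ∈ B | A ⊆ b} * (w - #A).choose (t - #A) = (n - #A).choose (t - #A) := by
  have key := card_mul_eq_card_mul (s := {b ∈ B | A ⊆ b})
    (t := {s ∈ (univ : Finset (Fin n)).powersetCard t | A ⊆ s}) (fun b s => s ⊆ b)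
    (m := (w - #A).choose (t - #A)) (n := 1) ?_ ?_
  · rwa [card_filter_powersetCard_subset _ _ _ (subset_univ A) hA, card_univ, Fintype.card_fin,
      mul_one] at key
  · intro b hb
    obtain ⟨hbB, hAb⟩ := mem_filter.mp hb
    rw [← hB.1 b hbB, ← card_filter_powersetCard_subset A b t hAb hA, bipartiteAbove]
    congr 1
    ext s
    simp only [mem_filter, mem_powersetCard, subset_univ, true_and]
    tauto
  · intro s hs
    obtain ⟨hst, hAs⟩ := mem_filter.mp hs
    obtain ⟨b, hb, huniq⟩ := hB.2 s (mem_powersetCard.mp hst).2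
    rw [card_eq_one]
    refine ⟨b, eq_singleton_iff_unique_mem.mpr ⟨?_, fun c hc => ?_⟩⟩
    · simp only [bipartiteBelow, mem_filter]
      exact ⟨⟨hb.1, hAs.trans hb.2⟩, hb.2⟩
    · simp only [bipartiteBelow, mem_filter] at hc
      exact huniq c ⟨hc.1.1, hc.2⟩

lemma card_filter_superset (hB : IsSteiner t w B) (htw : t ≤ w) {A : Finset (Fin n)}
    (hA : #A ≤ t) :
    #{b ∈ B | A ⊆ b} = (n - #A).choose (t - #A) / (w - #A).choose (t - #A) :=
  (Nat.div_eq_of_eq_mul_left (Nat.choose_pos (by omega))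
    (hB.card_filter_superset_mul hA).symm).symm

lemma card_eq (hB : IsSteiner t w B) (htw : t ≤ w) : #B = n.choose t / w.choose t := by
  simpa using hB.card_filter_superset htw (A := ∅) (Nat.zero_le t)

lemma card_filter_mem (hB : IsSteiner t w B) (ht : 1 ≤ t) (htw : t ≤ w) (p : Fin n) :
    #{b ∈ B | p ∈ b} = (n - 1).choose (t - 1) / (w - 1).choose (t - 1) := by
  simpa using hB.card_filter_superset htw (A := {p}) (by simpa using ht)

lemma card_filter_mem_and_not_superset (hB : IsSteiner t w B) (ht : 3 ≤ t) (htw : t ≤ w)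
    (htn : t ≤ n) {p : Fin n} {α : Finset (Fin n)} (hpα : p ∈ α) (hα : #α = t - 2) :
    #{c ∈ B | p ∈ c ∧ ¬ α ⊆ c} = (n - 1).choose (t - 1) / (w - 1).choose (t - 1)
      - (n - t + 2).choose 2 / (w - t + 2).choose 2 := by
  have hsplit : {c ∈ B | p ∈ c ∧ ¬ α ⊆ c} = {c ∈ B | p ∈ c} \ {c ∈ B | α ⊆ c} := by
    ext c; simp only [mem_filter, mem_sdiff]; tauto
  rw [hsplit, card_sdiff_of_subset (monotone_filter_right B fun c _ hc => hc hpα),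
    hB.card_filter_mem (by omega) htw, hB.card_filter_superset htw (by omega), hα,
    show n - (t - 2) = n - t + 2 by omega, show w - (t - 2) = w - t + 2 by omega,
    show t - (t - 2) = 2 by omega]

end IsSteiner

section CyclicWindow

variable {n k : ℕ}

def cyclicWindow (k : ℕ) (p : Fin n) : Finset (Fin n) :=
  (range k).image fun j => ⟨(p + j) % n, Nat.mod_lt _ p.pos⟩

lemma mem_cyclicWindow {p x : Fin n} :
    x ∈ cyclicWindow k p ↔ ∃ j < k, (x : ℕ) = (p + j) % n := by
  simp only [cyclicWindow, mem_image, mem_range, Fin.ext_iff]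
  exact exists_congr fun j => and_congr_right fun _ => eq_comm

lemma card_cyclicWindow (hkn : k ≤ n) (p : Fin n) : #(cyclicWindow k p) = k := by
  rw [cyclicWindow, card_image_of_injOn, card_range]
  intro j hj j' hj' h
  simp only [coe_range, Set.mem_Iio] at hj hj'
  have hmod : j % n = j' % n := Nat.ModEq.add_left_cancel' (p : ℕ) (congrArg Fin.val h)
  rwa [Nat.mod_eq_of_lt (by omega), Nat.mod_eq_of_lt (by omega)] at hmod

lemma self_mem_cyclicWindow (hk : 0 < k) (p : Fin n) : p ∈ cyclicWindow k p :=
  mem_cyclicWindow.mpr ⟨0, hk, by rw [Nat.add_zero, Nat.mod_eq_of_lt p.2]⟩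

lemma cyclicWindow_injective (hk : 0 < k) (hkn : k < n) :
    Function.Injective (cyclicWindow (n := n) k) := by
  -- The start of a window is its only point whose predecessor `p + (n - 1)` lies outside it.
  intro p p' h
  obtain ⟨j, hj, hp'⟩ := mem_cyclicWindow.mp (h ▸ self_mem_cyclicWindow hk p')
  obtain rfl | hj0 := Nat.eq_zero_or_pos j
  · exact Fin.ext (by rw [hp', Nat.add_zero, Nat.mod_eq_of_lt p.2])
  · have hpred : (⟨(p' + (n - 1)) % n, Nat.mod_lt _ p'.pos⟩ : Fin n) ∈ cyclicWindow k p' := by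
      rw [← h, mem_cyclicWindow]
      refine ⟨j - 1, by omega, ?_⟩
      change (p' + (n - 1)) % n = _
      rw [hp', Nat.mod_add_mod, show p + j + (n - 1) = p + (j - 1) + n by omega,
        Nat.add_mod_right]
    obtain ⟨i, hi, hpi⟩ := mem_cyclicWindow.mp hpred
    have hmod : (n - 1) % n = i % n := Nat.ModEq.add_left_cancel' (p' : ℕ) hpi
    rw [Nat.mod_eq_of_lt (by omega), Nat.mod_eq_of_lt (by omega)] at hmod
    omega

end CyclicWindow

section BlockCode

variable {n t w : ℕ} (B : Finset (Finset (Fin n))) (A : Fin n → Finset (Fin n)) (m : ℕ)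

noncomputable def blockSymbol (p : Fin n) (b : Finset (Fin n)) : ℕ :=
  if A p ⊆ b then mdColoring (derivedBlocks B (A p)) (b \ A p)
  else m + {c ∈ B | p ∈ c ∧ ¬ A p ⊆ c}.toList.idxOf b

noncomputable def blockWord (b : Finset (Fin n)) (p : Fin n) : ℕ :=
  if p ∈ b then blockSymbol B A m p b + 1 else 0

variable {B A m}

lemma blockWord_eq_zero_iff {b : Finset (Fin n)} {p : Fin n} :
    blockWord B A m b p = 0 ↔ p ∉ b := by
  unfold blockWord
  split_ifs with hp <;> simp [hp]

lemma suppN_blockWord (b : Finset (Fin n)) : suppN (blockWord B A m b) = b := by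
  ext p
  simp [suppN, blockWord_eq_zero_iff]

lemma blockSymbol_lt {p : Fin n} {b : Finset (Fin n)} (hb : b ∈ B) (hp : p ∈ b)
    (hm : chromNum (mdGraph (derivedBlocks B (A p))) ≤ m) :
    blockSymbol B A m p b < m + #{c ∈ B | p ∈ c ∧ ¬ A p ⊆ c} := by
  unfold blockSymbol
  split_ifs with hAb
  · exact (mdColoring_lt (sdiff_mem_derivedBlocks hb hAb)).trans_le
      (hm.trans (Nat.le_add_right _ _))
  · rw [← length_toList]
    exact Nat.add_lt_add_left (List.idxOf_lt_length_iff.mpr (mem_toList.mpr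
      (mem_filter.mpr ⟨hb, hp, hAb⟩))) m

lemma inter_eq_of_blockSymbol_eq (hB : IsSteiner t w B) {p : Fin n} (hA : #(A p) = t - 2)
    (hm : chromNum (mdGraph (derivedBlocks B (A p))) ≤ m) {b b' : Finset (Fin n)}
    (hb : b ∈ B) (hb' : b' ∈ B) (hne : b ≠ b') (hp : p ∈ b)
    (heq : blockSymbol B A m p b = blockSymbol B A m p b') : b ∩ b' = A p := by
  unfold blockSymbol at heq
  split_ifs at heq with hAb hAb' hAb'
  · have hsub : A p ⊆ b ∩ b' := subset_inter hAb hAb'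
    have hsd : (b \ A p) ∩ (b' \ A p) = (b ∩ b') \ A p := by
      ext x; simp only [mem_inter, mem_sdiff]; tauto
    have hne' : b \ A p ≠ b' \ A p := fun h =>
      hne (by rw [← sdiff_union_of_subset hAb, ← sdiff_union_of_subset hAb', h])
    have hcard : #((b ∩ b') \ A p) ≠ 1 := by
      rw [← hsd]
      exact fun h1 => mdColoring_ne (sdiff_mem_derivedBlocks hb hAb)
        (sdiff_mem_derivedBlocks hb' hAb') hne' h1 heq
    have hlt := hB.card_inter_lt_s12 hb hb' hne
    rw [card_sdiff_of_subset hsub] at hcard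
    have hle := card_le_card hsub
    exact (eq_of_subset_of_card_le hsub (by omega)).symm
  · have := mdColoring_lt (sdiff_mem_derivedBlocks hb hAb)
    omega
  · have := mdColoring_lt (sdiff_mem_derivedBlocks hb' hAb')
    omega
  · have hmem : b ∈ {c ∈ B | p ∈ c ∧ ¬ A p ⊆ c}.toList :=
      mem_toList.mpr (mem_filter.mpr ⟨hb, hp, hAb⟩)
    exact absurd ((List.idxOf_inj hmem).mp (Nat.add_left_cancel heq)) hne

lemma hammingDist_blockWord (hB : IsSteiner t w B) (htw : t ≤ w) (hA : ∀ p, #(A p) = t - 2)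
    (hA_inj : Function.Injective A) (hm : ∀ p, chromNum (mdGraph (derivedBlocks B (A p))) ≤ m)
    {b b' : Finset (Fin n)} (hb : b ∈ B) (hb' : b' ∈ B) (hne : b ≠ b') :
    2 * w - t + 1 ≤ hammingDist (blockWord B A m b) (blockWord B A m b') := by
  set E := {p ∈ b ∩ b' | blockWord B A m b p = blockWord B A m b' p}
  have hE : ∀ p ∈ E, b ∩ b' = A p := by
    intro p hp
    obtain ⟨hpbb, hpeq⟩ := mem_filter.mp hp
    obtain ⟨hpb, hpb'⟩ := mem_inter.mp hpbb
    simp only [blockWord, if_pos hpb, if_pos hpb', Nat.add_right_cancel_iff] at hpeq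
    exact inter_eq_of_blockSymbol_eq hB (hA p) (hm p) hb hb' hne hpb hpeq
  have hcount : #(b ∩ b') + #E ≤ t - 1 := by
    obtain hE0 | ⟨p, hp⟩ := E.eq_empty_or_nonempty
    · have := hB.card_inter_lt_s12 hb hb' hne
      rw [hE0, card_empty]
      omega
    · have hE1 : #E ≤ 1 := card_le_one.mpr fun p hp p' hp' =>
        hA_inj ((hE p hp).symm.trans (hE p' hp'))
      have hEle : #E ≤ #(b ∩ b') := card_le_card (filter_subset _ _)
      have hpos : 0 < #E := card_pos.mpr ⟨p, hp⟩
      rw [hE p hp, hA p] at hEle ⊢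
      omega
  have hdiff : (b ∪ b') \ E ⊆
      ({p | blockWord B A m b p ≠ blockWord B A m b' p} : Finset (Fin n)) := by
    intro p hp
    obtain ⟨hpu, hpE⟩ := mem_sdiff.mp hp
    rw [mem_filter]
    refine ⟨mem_univ p, fun heq => ?_⟩
    by_cases hpb : p ∈ b <;> by_cases hpb' : p ∈ b'
    · exact hpE (mem_filter.mpr ⟨mem_inter.mpr ⟨hpb, hpb'⟩, heq⟩)
    · exact blockWord_eq_zero_iff.mp (heq.trans (blockWord_eq_zero_iff.mpr hpb')) hpb
    · exact blockWord_eq_zero_iff.mp (heq.symm.trans (blockWord_eq_zero_iff.mpr hpb)) hpb'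
    · exact (mem_union.mp hpu).elim hpb hpb'
  have hunion := card_union_add_card_inter b b'
  rw [hB.1 b hb, hB.1 b' hb'] at hunion
  have hEsub : E ⊆ b ∪ b' := (filter_subset _ _).trans inter_subset_union
  have hEle := card_le_card hEsub
  refine le_trans ?_ (card_le_card hdiff)
  rw [card_sdiff_of_subset hEsub]
  have ht_pos := Nat.zero_lt_of_lt (hB.card_inter_lt_s12 hb hb' hne)
  omega

end BlockCode

theorem IsSteiner.exists_isCWCode {n t w : ℕ} {B : Finset (Finset (Fin n))}
    (hB : IsSteiner t w B) (ht : 3 ≤ t) (htw : t ≤ w) (hwn : w < n) :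
    ∃ C : Finset (Fin n → ℕ), IsCWCode n (n.choose t / w.choose t) w (2 * w - t + 1)
      ((n - 1).choose (t - 1) / (w - 1).choose (t - 1)
        - (n - t + 2).choose 2 / (w - t + 2).choose 2 + 1
        + (powersetCard (t - 2) univ).sup fun α => chromNum (mdGraph (derivedBlocks B α))) C := by
  set A : Fin n → Finset (Fin n) := cyclicWindow (t - 2)
  set m := (powersetCard (t - 2) univ).sup fun α => chromNum (mdGraph (derivedBlocks B α))
  have hA : ∀ p, #(A p) = t - 2 := card_cyclicWindow (by omega)
  have hm : ∀ p, chromNum (mdGraph (derivedBlocks B (A p))) ≤ m := fun p =>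
    le_sup (f := fun α => chromNum (mdGraph (derivedBlocks B α)))
      (mem_powersetCard.mpr ⟨subset_univ _, hA p⟩)
  have hother : ∀ p, #{c ∈ B | p ∈ c ∧ ¬ A p ⊆ c}
      = (n - 1).choose (t - 1) / (w - 1).choose (t - 1)
        - (n - t + 2).choose 2 / (w - t + 2).choose 2 := fun p =>
    hB.card_filter_mem_and_not_superset ht htw (by omega)
      (self_mem_cyclicWindow (by omega) p) (hA p)
  have hinj : Set.InjOn (blockWord B A m) B := fun b _ b' _ h => by
    rw [← suppN_blockWord (B := B) (A := A) (m := m) b, h, suppN_blockWord]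
  refine ⟨B.image (blockWord B A m), ?_, forall_mem_image.mpr ?_, forall_mem_image.mpr ?_,
    forall_mem_image.mpr fun b hb => forall_mem_image.mpr ?_⟩
  · rw [card_image_of_injOn hinj, hB.card_eq htw]
  · intro b hb p
    unfold blockWord
    split_ifs with hp
    · have := blockSymbol_lt hb hp (hm p)
      rw [hother p] at this
      omega
    · omega
  · intro b hb
    rw [suppN_blockWord, hB.1 b hb]
  · intro b' hb' hne
    exact hammingDist_blockWord hB htw hA (cyclicWindow_injective (by omega) (by omega)) hm hb hb'
      fun h => hne (congrArg _ h)

/-- If an `S(t,w,n)` exists (`t ≥ 3`), then the smallest `q` for which an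
`(n, C(n,t)/C(w,t), w, 2w-t+1)_q` code exists is at most
`C(n-1,t-1)/C(w-1,t-1) - C(n-t+2,2)/C(w-t+2,2) + 1` plus the minimum over all
`S(t,w,n)` systems `S` of the maximum over `(t-2)`-subsets `α` of the points
of the chromatic number of the minimum-distance graph of the system derived
from `S` at `α`. -/
theorem stmt_12 (n w t : ℕ) (ht : 3 ≤ t) (htw : t ≤ w) (hwn : w < n)
    (B0 : Finset (Finset (Fin n))) (hB0 : IsSteiner t w B0) :
    ∃ q : ℕ,
      q ≤ Nat.choose (n - 1) (t - 1) / Nat.choose (w - 1) (t - 1)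
          - Nat.choose (n - t + 2) 2 / Nat.choose (w - t + 2) 2 + 1
          + sInf {m : ℕ | ∃ B : Finset (Finset (Fin n)), IsSteiner t w B ∧
              m = (Finset.powersetCard (t - 2) (Finset.univ : Finset (Fin n))).sup
                    (fun α => chromNum (mdGraph (derivedBlocks B α)))} ∧
      ∃ C : Finset (Fin n → ℕ),
        IsCWCode n (Nat.choose n t / Nat.choose w t) w (2 * w - t + 1) q C := by
  obtain ⟨B, hB, hmin⟩ := Nat.sInf_mem (s := {m : ℕ | ∃ B : Finset (Finset (Fin n)),
      IsSteiner t w B ∧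
        m = (powersetCard (t - 2) univ).sup fun α => chromNum (mdGraph (derivedBlocks B α))})
    ⟨_, B0, hB0, rfl⟩
  rw [hmin]
  exact ⟨_, le_rfl, hB.exists_isCWCode ht htw hwn⟩
end

section
/- There exists an (11, 66, 5, 7)_11 code (note 66 = C(11,4)/C(5,4) and 7 = 2·5−4+1), and for every q ≤ 8 there is no (11, 66, 5, 7)_q code. Equivalently, the smallest q for which an (11, 66, 5, 7)_q code exists lies between 9 and 11. -/
set_option maxRecDepth 100000
set_option maxHeartbeats 4000000

open Finset

lemma mem_suppN {x : Fin 11 → ℕ} {i : Fin 11} : i ∈ suppN x ↔ x i ≠ 0 := by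
  simp [suppN]

variable {C : Finset (Fin 11 → ℕ)}

/-- Key inequality: intersection size plus agreement count is at most 3. -/
lemma keyLemma (hw : ∀ x ∈ C, (suppN x).card = 5)
    (hd : ∀ x ∈ C, ∀ y ∈ C, x ≠ y → 7 ≤ hammingDist x y)
    {x y : Fin 11 → ℕ} (hx : x ∈ C) (hy : y ∈ C) (hxy : x ≠ y) :
    (suppN x ∩ suppN y).card +
      ((suppN x ∩ suppN y).filter (fun i => x i = y i)).card ≤ 3 := by
  have hdist := hd x hx y hy hxy
  have hE : (univ.filter fun i => x i = y i).card + hammingDist x y = 11 := by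
    have h1 : hammingDist x y = (univ.filter fun i => ¬ (x i = y i)).card := rfl
    rw [h1, Finset.card_filter_add_card_filter_not]
    simp
  set E := univ.filter fun i => x i = y i with hEdef
  set A := (suppN x ∩ suppN y).filter (fun i => x i = y i) with hAdef
  set Z := (univ : Finset (Fin 11)) \ (suppN x ∪ suppN y) with hZdef
  have hAZ : Disjoint A Z := by
    rw [Finset.disjoint_left]
    intro i hiA hiZ
    rw [hZdef, mem_sdiff] at hiZ
    exact hiZ.2 (mem_union_left _ (mem_inter.mp (mem_filter.mp hiA).1).1)
  have hAE : A ⊆ E := by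
    intro i hi
    exact mem_filter.mpr ⟨mem_univ _, (mem_filter.mp hi).2⟩
  have hZE : Z ⊆ E := by
    intro i hi
    rw [hZdef, mem_sdiff, Finset.mem_union] at hi
    push_neg at hi
    have h0 : x i = 0 := by
      by_contra h; exact hi.2.1 (mem_suppN.mpr h)
    have h1 : y i = 0 := by
      by_contra h; exact hi.2.2 (mem_suppN.mpr h)
    exact mem_filter.mpr ⟨mem_univ _, by rw [h0, h1]⟩
  have hcardAZ : A.card + Z.card ≤ E.card := by
    rw [← card_union_of_disjoint hAZ]
    exact card_le_card (union_subset hAE hZE)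
  have hZcard : Z.card + (suppN x ∪ suppN y).card = 11 := by
    rw [hZdef, card_sdiff_of_subset (subset_univ _)]
    have := card_le_card (subset_univ (suppN x ∪ suppN y))
    simp only [card_univ, Fintype.card_fin] at this ⊢
    omega
  have hUI : (suppN x ∪ suppN y).card + (suppN x ∩ suppN y).card = 10 := by
    rw [card_union_add_card_inter, hw x hx, hw y hy]
  omega

/-- Any 4-set is contained in the support of at most one codeword. -/
lemma unique4 (hw : ∀ x ∈ C, (suppN x).card = 5)
    (hd : ∀ x ∈ C, ∀ y ∈ C, x ≠ y → 7 ≤ hammingDist x y)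
    {F : Finset (Fin 11)} (hF : F.card = 4)
    {x y : Fin 11 → ℕ} (hx : x ∈ C) (hy : y ∈ C)
    (hFx : F ⊆ suppN x) (hFy : F ⊆ suppN y) : x = y := by
  by_contra hne
  have h4 : 4 ≤ (suppN x ∩ suppN y).card := by
    calc 4 = F.card := hF.symm
    _ ≤ _ := card_le_card (subset_inter hFx hFy)
  have := keyLemma hw hd hx hy hne
  omega

/-- Every 4-subset of `Fin 11` is contained in the support of some codeword. -/
lemma exactCover (hcard : C.card = 66)
    (hw : ∀ x ∈ C, (suppN x).card = 5)
    (hd : ∀ x ∈ C, ∀ y ∈ C, x ≠ y → 7 ≤ hammingDist x y) :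
    ∀ F : Finset (Fin 11), F.card = 4 → ∃ x ∈ C, F ⊆ suppN x := by
  set 𝒜 := powersetCard 4 (univ : Finset (Fin 11)) with h𝒜
  have hAcard : 𝒜.card = 330 := by
    rw [h𝒜, card_powersetCard, card_univ, Fintype.card_fin]; rfl
  have hone : ∀ F ∈ 𝒜, (C.filter fun x => F ⊆ suppN x).card ≤ 1 := by
    intro F hF
    apply card_le_one.mpr
    intro a ha b hb
    simp only [mem_filter] at ha hb
    exact unique4 hw hd (mem_powersetCard.mp hF).2 ha.1 hb.1 ha.2 hb.2
  have hswap : ∑ F ∈ 𝒜, (C.filter fun x => F ⊆ suppN x).card = 330 := by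
    have hstep : ∀ F ∈ 𝒜, (C.filter fun x => F ⊆ suppN x).card
        = ∑ x ∈ C, if F ⊆ suppN x then 1 else 0 := fun F _ => card_filter _ _
    rw [Finset.sum_congr rfl hstep, Finset.sum_comm]
    have hinner : ∀ x ∈ C, (∑ F ∈ 𝒜, if F ⊆ suppN x then 1 else 0) = 5 := by
      intro x hx
      rw [← card_filter]
      have hfe : 𝒜.filter (fun F => F ⊆ suppN x) = (suppN x).powersetCard 4 := by
        ext F
        simp only [h𝒜, mem_filter, mem_powersetCard, subset_univ, true_and]
        tauto
      rw [hfe, card_powersetCard, hw x hx]; rfl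
    rw [Finset.sum_congr rfl hinner, Finset.sum_const, hcard]; rfl
  have hall : ∀ F ∈ 𝒜, (C.filter fun x => F ⊆ suppN x).card = 1 := by
    have h1 : ∑ F ∈ 𝒜, (C.filter fun x => F ⊆ suppN x).card
        = ∑ F ∈ 𝒜, 1 := by
      rw [hswap, Finset.sum_const, hAcard, smul_eq_mul, mul_one]
    exact fun F hF => (Finset.sum_eq_sum_iff_of_le hone).mp h1 F hF
  intro F hF
  have hFA : F ∈ 𝒜 := mem_powersetCard.mpr ⟨subset_univ _, hF⟩
  have := hall F hFA
  obtain ⟨x, hx⟩ := card_pos.mp (by omega : 0 < (C.filter fun x => F ⊆ suppN x).card)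
  exact ⟨x, (mem_filter.mp hx).1, (mem_filter.mp hx).2⟩

/-- At most 4 codewords contain a given 3-set in their support. -/
lemma triple4 (hw : ∀ x ∈ C, (suppN x).card = 5)
    (hd : ∀ x ∈ C, ∀ y ∈ C, x ≠ y → 7 ≤ hammingDist x y)
    {T : Finset (Fin 11)} (hT : T.card = 3) :
    (C.filter fun x => T ⊆ suppN x).card ≤ 4 := by
  set D := C.filter fun x => T ⊆ suppN x with hD
  have hdisj : ∀ x ∈ D, ∀ y ∈ D, x ≠ y → Disjoint (suppN x \ T) (suppN y \ T) := by
    intro x hx y hy hxy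
    rw [Finset.disjoint_left]
    intro i hix hiy
    simp only [hD, mem_filter, mem_sdiff] at hix hiy hx hy
    have hsub : insert i T ⊆ suppN x ∩ suppN y := by
      intro j hj
      rcases mem_insert.mp hj with rfl | hj
      · exact mem_inter.mpr ⟨hix.1, hiy.1⟩
      · exact mem_inter.mpr ⟨hx.2 hj, hy.2 hj⟩
    have h4 : 4 ≤ (suppN x ∩ suppN y).card := by
      have := card_le_card hsub
      rwa [card_insert_of_notMem hix.2, hT] at this
    have := keyLemma hw hd hx.1 hy.1 hxy
    omega
  have hbi : (D.biUnion fun x => suppN x \ T).card = ∑ x ∈ D, (suppN x \ T).card :=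
    card_biUnion hdisj
  have heach : ∀ x ∈ D, (suppN x \ T).card = 2 := by
    intro x hx
    simp only [hD, mem_filter] at hx
    rw [card_sdiff_of_subset hx.2, hw x hx.1, hT]
  have hsub8 : (D.biUnion fun x => suppN x \ T).card ≤ 8 := by
    have hsub : (D.biUnion fun x => suppN x \ T) ⊆ univ \ T := by
      intro i hi
      obtain ⟨x, _, hix⟩ := mem_biUnion.mp hi
      exact mem_sdiff.mpr ⟨mem_univ _, (mem_sdiff.mp hix).2⟩
    have := card_le_card hsub
    rwa [card_sdiff_of_subset (subset_univ _), card_univ, Fintype.card_fin, hT] at this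
  rw [hbi, Finset.sum_congr rfl heach, Finset.sum_const, smul_eq_mul] at hsub8
  omega

def Pr : Finset (Fin 11) := {0, 1}

lemma Pr_card : Pr.card = 2 := by decide

/-- Exactly 12 codewords contain `{0,1}` in their support. -/
lemma pair12 (hcard : C.card = 66)
    (hw : ∀ x ∈ C, (suppN x).card = 5)
    (hd : ∀ x ∈ C, ∀ y ∈ C, x ≠ y → 7 ≤ hammingDist x y) :
    (C.filter fun x => Pr ⊆ suppN x).card = 12 := by
  set ℬ := powersetCard 2 ((univ : Finset (Fin 11)) \ Pr) with hℬ
  have hBcard : ℬ.card = 36 := by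
    rw [hℬ, card_powersetCard, card_sdiff_of_subset (subset_univ _), card_univ,
      Fintype.card_fin, Pr_card]; rfl
  have hone : ∀ Q ∈ ℬ, (C.filter fun x => Pr ∪ Q ⊆ suppN x).card = 1 := by
    intro Q hQ
    rw [hℬ, mem_powersetCard] at hQ
    have hdisjPQ : Disjoint Pr Q := by
      rw [Finset.disjoint_right]
      intro i hiQ
      exact (mem_sdiff.mp (hQ.1 hiQ)).2
    have hPQ4 : (Pr ∪ Q).card = 4 := by
      rw [card_union_of_disjoint hdisjPQ, Pr_card, hQ.2]
    rw [Finset.card_eq_one]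
    obtain ⟨x, hxC, hxs⟩ := exactCover hcard hw hd _ hPQ4
    refine ⟨x, ?_⟩
    ext y
    simp only [mem_filter, Finset.mem_singleton]
    constructor
    · rintro ⟨hyC, hys⟩
      exact unique4 hw hd hPQ4 hyC hxC hys hxs
    · rintro rfl
      exact ⟨hxC, hxs⟩
  have hsum1 : ∑ Q ∈ ℬ, (C.filter fun x => Pr ∪ Q ⊆ suppN x).card = 36 := by
    rw [Finset.sum_congr rfl hone, Finset.sum_const, hBcard, smul_eq_mul, mul_one]
  have hswap : ∑ Q ∈ ℬ, (C.filter fun x => Pr ∪ Q ⊆ suppN x).card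
      = ∑ x ∈ C, (ℬ.filter fun Q => Pr ∪ Q ⊆ suppN x).card := by
    have hstep : ∀ Q ∈ ℬ, (C.filter fun x => Pr ∪ Q ⊆ suppN x).card
        = ∑ x ∈ C, if Pr ∪ Q ⊆ suppN x then 1 else 0 := fun Q _ => card_filter _ _
    rw [Finset.sum_congr rfl hstep, Finset.sum_comm]
    exact Finset.sum_congr rfl fun x _ => (card_filter _ _).symm
  have hinner : ∀ x ∈ C, (ℬ.filter fun Q => Pr ∪ Q ⊆ suppN x).card
      = if Pr ⊆ suppN x then 3 else 0 := by
    intro x hx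
    by_cases hPx : Pr ⊆ suppN x
    · rw [if_pos hPx]
      have hfe : ℬ.filter (fun Q => Pr ∪ Q ⊆ suppN x)
          = (suppN x \ Pr).powersetCard 2 := by
        ext Q
        simp only [hℬ, mem_filter, mem_powersetCard]
        constructor
        · rintro ⟨⟨hQu, hQ2⟩, hQs⟩
          refine ⟨fun i hi => mem_sdiff.mpr
            ⟨hQs (mem_union_right _ hi), (mem_sdiff.mp (hQu hi)).2⟩, hQ2⟩
        · rintro ⟨hQs, hQ2⟩
          refine ⟨⟨fun i hi => mem_sdiff.mpr ⟨mem_univ _, (mem_sdiff.mp (hQs hi)).2⟩, hQ2⟩,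
            union_subset hPx (fun i hi => (mem_sdiff.mp (hQs hi)).1)⟩
      rw [hfe, card_powersetCard, card_sdiff_of_subset hPx, hw x hx, Pr_card]; rfl
    · rw [if_neg hPx]
      rw [Finset.card_eq_zero, Finset.filter_eq_empty_iff]
      intro Q _ hQs
      exact hPx (fun i hi => hQs (mem_union_left _ hi))
  have hfinal : ∑ x ∈ C, (ℬ.filter fun Q => Pr ∪ Q ⊆ suppN x).card
      = 3 * (C.filter fun x => Pr ⊆ suppN x).card := by
    rw [Finset.sum_congr rfl hinner, ← Finset.sum_filter, Finset.sum_const, smul_eq_mul,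
      mul_comm]
  rw [hswap, hfinal] at hsum1
  omega

/-- Triple of a codeword through `Pr`. -/
def tri (x : Fin 11 → ℕ) : Finset (Fin 11) := suppN x \ Pr

/-- Parallelism is transitive among blocks through `Pr`. -/
lemma parallel_trans (hcard : C.card = 66)
    (hw : ∀ x ∈ C, (suppN x).card = 5)
    (hd : ∀ x ∈ C, ∀ y ∈ C, x ≠ y → 7 ≤ hammingDist x y)
    {x y z : Fin 11 → ℕ} (hx : x ∈ C) (hy : y ∈ C) (hz : z ∈ C)
    (hPx : Pr ⊆ suppN x) (hPy : Pr ⊆ suppN y) (hPz : Pr ⊆ suppN z)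
    (hxy : Disjoint (tri x) (tri y)) (hyz : Disjoint (tri y) (tri z))
    (hxz : x ≠ z) : Disjoint (tri x) (tri z) := by
  by_contra hcon
  obtain ⟨w, hwx, hwz⟩ := Finset.not_disjoint_iff.mp hcon
  have hwP : w ∉ Pr := (mem_sdiff.mp hwx).2
  set T : Finset (Fin 11) := insert w Pr with hT
  have hTcard : T.card = 3 := by
    rw [hT, card_insert_of_notMem hwP, Pr_card]
  have hwy : w ∉ tri y := Finset.disjoint_left.mp hxy hwx
  have hwsy : w ∉ suppN y := fun h => hwy (mem_sdiff.mpr ⟨h, hwP⟩)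
  -- the subsets T ⊆ supp for x and z
  have hTx : T ⊆ suppN x := by
    intro i hi
    rcases mem_insert.mp hi with rfl | hi
    · exact (mem_sdiff.mp hwx).1
    · exact hPx hi
  have hTz : T ⊆ suppN z := by
    intro i hi
    rcases mem_insert.mp hi with rfl | hi
    · exact (mem_sdiff.mp hwz).1
    · exact hPz hi
  have htri_y : (tri y).card = 3 := by
    rw [tri, card_sdiff_of_subset hPy, hw y hy, Pr_card]
  -- choose for each p ∈ tri y a block containing insert p T
  have hgex : ∀ p : Fin 11, ∃ u, p ∈ tri y → u ∈ C ∧ insert p T ⊆ suppN u := by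
    intro p
    by_cases hp : p ∈ tri y
    · have hpT : p ∉ T := by
        rw [hT, mem_insert]
        push_neg
        refine ⟨?_, (mem_sdiff.mp hp).2⟩
        rintro rfl
        exact hwy hp
      have h4 : (insert p T).card = 4 := by
        rw [card_insert_of_notMem hpT, hTcard]
      obtain ⟨u, hu1, hu2⟩ := exactCover hcard hw hd _ h4
      exact ⟨u, fun _ => ⟨hu1, hu2⟩⟩
    · exact ⟨x, fun h => absurd h hp⟩
  choose g hg using hgex
  -- g is injective on tri y
  have hginj : Set.InjOn g (tri y) := by
    intro p hp p' hp' hgpp'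
    by_contra hne
    have h1 := hg p hp
    have h2 := hg p' hp'
    rw [hgpp'] at h1
    -- supp (g p') contains  p, p', 0, 1 : so g p' = y, but w ∈ supp (g p')
    have hsub : insert p (insert p' Pr) ⊆ suppN (g p') ∩ suppN y := by
      intro i hi
      rcases mem_insert.mp hi with rfl | hi
      · exact mem_inter.mpr ⟨h1.2 (mem_insert_self _ _), (mem_sdiff.mp hp).1⟩
      rcases mem_insert.mp hi with rfl | hi
      · exact mem_inter.mpr ⟨h2.2 (mem_insert_self _ _), (mem_sdiff.mp hp').1⟩
      · exact mem_inter.mpr ⟨h2.2 (mem_insert_of_mem (mem_insert_of_mem hi)),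
          hPy hi⟩
    have hc4 : (insert p (insert p' Pr)).card = 4 := by
      rw [card_insert_of_notMem, card_insert_of_notMem (mem_sdiff.mp hp').2, Pr_card]
      rw [mem_insert]
      push_neg
      exact ⟨hne, (mem_sdiff.mp hp).2⟩
    have heq : g p' = y := unique4 hw hd hc4 h1.1 hy
      (fun i hi => (mem_inter.mp (hsub hi)).1) (fun i hi => (mem_inter.mp (hsub hi)).2)
    have : w ∈ suppN (g p') := h2.2 (mem_insert_of_mem (mem_insert_self _ _))
    rw [heq] at this
    exact hwsy this
  -- x and z are not in the image of g
  have hxim : ∀ p ∈ tri y, g p ≠ x := by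
    intro p hp hgx
    have := (hg p hp).2 (mem_insert_self _ _)
    rw [hgx] at this
    have hptx : p ∈ tri x := mem_sdiff.mpr ⟨this, (mem_sdiff.mp hp).2⟩
    exact Finset.disjoint_left.mp hxy hptx hp
  have hzim : ∀ p ∈ tri y, g p ≠ z := by
    intro p hp hgz
    have := (hg p hp).2 (mem_insert_self _ _)
    rw [hgz] at this
    have hptz : p ∈ tri z := mem_sdiff.mpr ⟨this, (mem_sdiff.mp hp).2⟩
    exact Finset.disjoint_left.mp hyz hp hptz
  -- all 5 blocks are in D
  set D := C.filter fun u => T ⊆ suppN u with hD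
  have hE5 : insert x (insert z ((tri y).image g)) ⊆ D := by
    intro u hu
    rcases mem_insert.mp hu with rfl | hu
    · exact mem_filter.mpr ⟨hx, hTx⟩
    rcases mem_insert.mp hu with rfl | hu
    · exact mem_filter.mpr ⟨hz, hTz⟩
    · obtain ⟨p, hp, rfl⟩ := Finset.mem_image.mp hu
      exact mem_filter.mpr ⟨(hg p hp).1,
        fun i hi => (hg p hp).2 (mem_insert_of_mem hi)⟩
  have hcard5 : (insert x (insert z ((tri y).image g))).card = 5 := by
    rw [card_insert_of_notMem, card_insert_of_notMem, Finset.card_image_of_injOn hginj,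
      htri_y]
    · intro h
      obtain ⟨p, hp, hgp⟩ := Finset.mem_image.mp h
      exact hzim p hp hgp
    · intro h
      rcases mem_insert.mp h with h | h
      · exact hxz h
      obtain ⟨p, hp, hgp⟩ := Finset.mem_image.mp h
      exact hxim p hp hgp
  have := card_le_card hE5
  rw [hcard5] at this
  have := triple4 hw hd hTcard
  rw [← hD] at this
  omega

lemma abn {a b n : ℕ} (ha : 1 ≤ a) (hb : 1 ≤ b) (hn : n ≤ 3) (h : n ≤ a * b) :
    n + 1 ≤ a + b := by
  rcases Nat.lt_or_ge a 2 with h1 | h1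
  · have : a = 1 := by omega
    subst this
    simp at h
    omega
  rcases Nat.lt_or_ge b 2 with h2 | h2
  · have : b = 1 := by omega
    subst this
    simp at h
    omega
  omega

/-- No `(11, 66, 5, 7)` code exists with alphabet values below `8`. -/
theorem nonex8 (hcard : C.card = 66)
    (hq : ∀ x ∈ C, ∀ i, x i < 8)
    (hw : ∀ x ∈ C, (suppN x).card = 5)
    (hd : ∀ x ∈ C, ∀ y ∈ C, x ≠ y → 7 ≤ hammingDist x y) : False := by
  classical
  set L := C.filter fun x => Pr ⊆ suppN x with hL
  have hL12 : L.card = 12 := pair12 hcard hw hd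
  -- the equivalence relation
  set R : (Fin 11 → ℕ) → (Fin 11 → ℕ) → Prop :=
    fun x y => x = y ∨ Disjoint (tri x) (tri y) with hR
  have hmemL : ∀ x ∈ L, x ∈ C ∧ Pr ⊆ suppN x := fun x hx => mem_filter.mp hx
  have hRsymm : ∀ x y, R x y → R y x := by
    rintro x y (rfl | h)
    · exact Or.inl rfl
    · exact Or.inr h.symm
  have hRtrans : ∀ x ∈ L, ∀ y ∈ L, ∀ z ∈ L, R x y → R y z → R x z := by
    rintro x hx y hy z hz (rfl | h1) h2
    · exact h2
    rcases h2 with rfl | h2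
    · exact Or.inr h1
    by_cases hxz : x = z
    · exact Or.inl hxz
    · exact Or.inr (parallel_trans hcard hw hd (hmemL x hx).1 (hmemL y hy).1
        (hmemL z hz).1 (hmemL x hx).2 (hmemL y hy).2 (hmemL z hz).2 h1 h2 hxz)
  set cls : (Fin 11 → ℕ) → Finset (Fin 11 → ℕ) := fun x => L.filter (R x) with hcls
  have hself : ∀ x ∈ L, x ∈ cls x := fun x hx => mem_filter.mpr ⟨hx, Or.inl rfl⟩
  have hclssub : ∀ x, cls x ⊆ L := fun x => filter_subset _ _
  have hclseq : ∀ x ∈ L, ∀ y ∈ L, R x y → cls x = cls y := by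
    intro x hx y hy hxy
    ext z
    simp only [hcls, mem_filter, and_congr_right_iff]
    intro hz
    exact ⟨fun h => hRtrans y hy x hx z hz (hRsymm x y hxy) h,
      fun h => hRtrans x hx y hy z hz hxy h⟩
  have hclsR : ∀ x ∈ L, ∀ y, y ∈ cls x → R x y := fun x hx y hy => (mem_filter.mp hy).2
  -- members of distinct classes are not related
  set K := L.image cls with hK
  have hKdisj : ∀ c ∈ K, ∀ c' ∈ K, c ≠ c' → Disjoint c c' := by
    intro c hc c' hc' hne
    obtain ⟨a, ha, rfl⟩ := Finset.mem_image.mp hc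
    obtain ⟨b, hb, rfl⟩ := Finset.mem_image.mp hc'
    rw [Finset.disjoint_left]
    intro z hza hzb
    have hzL := hclssub a hza
    have h1 : R a z := hclsR a ha z hza
    have h2 : R b z := hclsR b hb z hzb
    exact hne (hclseq a ha b hb (hRtrans a ha z hzL b hb h1 (hRsymm b z h2)))
  have hcover : K.biUnion id = L := by
    ext x
    simp only [mem_biUnion, id]
    constructor
    · rintro ⟨c, hc, hxc⟩
      obtain ⟨a, _, rfl⟩ := Finset.mem_image.mp hc
      exact hclssub a hxc
    · intro hx
      exact ⟨cls x, Finset.mem_image_of_mem cls hx, hself x hx⟩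
  have hsum12 : ∑ c ∈ K, c.card = 12 := by
    rw [← card_biUnion hKdisj]
    simp only [← hcover] at hL12
    exact hL12
  -- class members have pairwise disjoint triples, each of size 3
  have htri3 : ∀ x ∈ L, (tri x).card = 3 := by
    intro x hx
    rw [tri, card_sdiff_of_subset (hmemL x hx).2, hw x (hmemL x hx).1, Pr_card]
  have hc3 : ∀ c ∈ K, c.card ≤ 3 := by
    intro c hc
    obtain ⟨a, ha, rfl⟩ := Finset.mem_image.mp hc
    have hdisjtri : ∀ x ∈ cls a, ∀ y ∈ cls a, x ≠ y → Disjoint (tri x) (tri y) := by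
      intro x hx y hy hxy
      have h1 : R x y := hRtrans x (hclssub a hx) a ha y (hclssub a hy)
        (hRsymm a x (hclsR a ha x hx)) (hclsR a ha y hy)
      rcases h1 with rfl | h1
      · exact absurd rfl hxy
      · exact h1
    have hbi : ((cls a).biUnion tri).card = ∑ x ∈ cls a, (tri x).card :=
      card_biUnion hdisjtri
    have hsub9 : ((cls a).biUnion tri).card ≤ 9 := by
      have hsub : (cls a).biUnion tri ⊆ univ \ Pr := by
        intro i hi
        obtain ⟨x, _, hix⟩ := mem_biUnion.mp hi
        exact mem_sdiff.mpr ⟨mem_univ _, (mem_sdiff.mp hix).2⟩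
      have := card_le_card hsub
      rwa [card_sdiff_of_subset (subset_univ _), card_univ, Fintype.card_fin, Pr_card] at this
    have heach : ∀ x ∈ cls a, (tri x).card = 3 := fun x hx => htri3 x (hclssub a hx)
    rw [Finset.sum_congr rfl heach, Finset.sum_const, smul_eq_mul] at hbi
    omega
  have hK4 : 4 ≤ K.card := by
    have : ∑ c ∈ K, c.card ≤ ∑ c ∈ K, 3 := Finset.sum_le_sum hc3
    rw [hsum12, Finset.sum_const, smul_eq_mul] at this
    omega
  -- value sets
  set S : Finset (Fin 11 → ℕ) → Finset ℕ := fun c => c.image fun x => x 0 with hS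
  set T' : Finset (Fin 11 → ℕ) → Finset ℕ := fun c => c.image fun x => x 1 with hT'
  -- key distance facts between members of classes
  have hcross : ∀ c ∈ K, ∀ c' ∈ K, c ≠ c' → ∀ x ∈ c, ∀ y ∈ c',
      x 0 ≠ y 0 ∧ x 1 ≠ y 1 := by
    intro c hc c' hc' hne x hxc y hyc
    obtain ⟨a, ha, rfl⟩ := Finset.mem_image.mp hc
    obtain ⟨b, hb, rfl⟩ := Finset.mem_image.mp hc'
    have hxL := hclssub a hxc
    have hyL := hclssub b hyc
    have hxy : x ≠ y := by
      rintro rfl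
      exact Finset.disjoint_left.mp (hKdisj _ hc _ hc' hne) hxc hyc
    have hnR : ¬ R x y := by
      intro hRxy
      have h1 : cls a = cls x := hclseq a ha x hxL (hclsR a ha x hxc)
      have h2 : cls b = cls y := hclseq b hb y hyL (hclsR b hb y hyc)
      exact hne (by rw [h1, h2, hclseq x hxL y hyL hRxy])
    have hnd : ¬ Disjoint (tri x) (tri y) := fun h => hnR (Or.inr h)
    obtain ⟨w, hwx, hwy⟩ := Finset.not_disjoint_iff.mp hnd
    have hkey := keyLemma hw hd (hmemL x hxL).1 (hmemL y hyL).1 hxy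
    have hwP : w ∉ Pr := (mem_sdiff.mp hwx).2
    have hsub3 : insert w Pr ⊆ suppN x ∩ suppN y := by
      intro i hi
      rcases mem_insert.mp hi with rfl | hi
      · exact mem_inter.mpr ⟨(mem_sdiff.mp hwx).1, (mem_sdiff.mp hwy).1⟩
      · exact mem_inter.mpr ⟨(hmemL x hxL).2 hi, (hmemL y hyL).2 hi⟩
    have ht3 : 3 ≤ (suppN x ∩ suppN y).card := by
      have := card_le_card hsub3
      rwa [card_insert_of_notMem hwP, Pr_card] at this
    constructor
    · intro h0
      have : (0 : Fin 11) ∈ (suppN x ∩ suppN y).filter fun i => x i = y i :=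
        mem_filter.mpr ⟨hsub3 (mem_insert_of_mem (by decide)), h0⟩
      have := Finset.card_pos.mpr ⟨_, this⟩
      omega
    · intro h1
      have : (1 : Fin 11) ∈ (suppN x ∩ suppN y).filter fun i => x i = y i :=
        mem_filter.mpr ⟨hsub3 (mem_insert_of_mem (by decide)), h1⟩
      have := Finset.card_pos.mpr ⟨_, this⟩
      omega
  have hwithin : ∀ c ∈ K, ∀ x ∈ c, ∀ y ∈ c, x ≠ y → ¬ (x 0 = y 0 ∧ x 1 = y 1) := by
    intro c hc x hxc y hyc hxy ⟨h0, h1⟩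
    obtain ⟨a, ha, rfl⟩ := Finset.mem_image.mp hc
    have hxL := hclssub a hxc
    have hyL := hclssub a hyc
    have hkey := keyLemma hw hd (hmemL x hxL).1 (hmemL y hyL).1 hxy
    have hsub : Pr ⊆ (suppN x ∩ suppN y).filter fun i => x i = y i := by
      intro i hi
      have hix : i ∈ suppN x := (hmemL x hxL).2 hi
      have hiy : i ∈ suppN y := (hmemL y hyL).2 hi
      refine mem_filter.mpr ⟨mem_inter.mpr ⟨hix, hiy⟩, ?_⟩
      have : i = 0 ∨ i = 1 := by
        have := hi
        simp only [Pr, Finset.mem_insert, Finset.mem_singleton] at this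
        exact this
      rcases this with rfl | rfl
      · exact h0
      · exact h1
    have h2 := card_le_card hsub
    rw [Pr_card] at h2
    have h2' := card_le_card (Finset.inter_subset_left
      (s₁ := suppN x) (s₂ := suppN y))
    have hsub2 : Pr ⊆ suppN x ∩ suppN y :=
      fun i hi => (mem_filter.mp (hsub hi)).1
    have h3 := card_le_card hsub2
    rw [Pr_card] at h3
    omega
  -- per-class injectivity into value pairs
  have hclassineq : ∀ c ∈ K, c.card + 1 ≤ (S c).card + (T' c).card := by
    intro c hc
    obtain ⟨a, ha, hceq⟩ := Finset.mem_image.mp hc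
    have hne : c.Nonempty := ⟨a, hceq ▸ hself a ha⟩
    have hSne : 1 ≤ (S c).card := by
      obtain ⟨u, hu⟩ := hne
      exact Finset.card_pos.mpr ⟨u 0, Finset.mem_image_of_mem _ hu⟩
    have hTne : 1 ≤ (T' c).card := by
      obtain ⟨u, hu⟩ := hne
      exact Finset.card_pos.mpr ⟨u 1, Finset.mem_image_of_mem _ hu⟩
    have hinj : Set.InjOn (fun x : Fin 11 → ℕ => (x 0, x 1)) ↑c := by
      intro u hu v hv huv
      by_contra hne2
      have := hwithin c hc u hu v hv hne2
      simp only [Prod.mk.injEq] at huv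
      exact this ⟨huv.1, huv.2⟩
    have hmaps : ∀ u ∈ c, (u 0, u 1) ∈ (S c) ×ˢ (T' c) := by
      intro u hu
      exact Finset.mem_product.mpr ⟨Finset.mem_image_of_mem _ hu,
        Finset.mem_image_of_mem _ hu⟩
    have hle : c.card ≤ ((S c) ×ˢ (T' c)).card :=
      Finset.card_le_card_of_injOn _ hmaps hinj
    rw [Finset.card_product] at hle
    exact abn hSne hTne (hc3 c hc) hle
  -- value sets live in Ioo 0 8 and are pairwise disjoint across classes
  have hvalsub : ∀ c ∈ K, S c ⊆ Finset.Ioo 0 8 ∧ T' c ⊆ Finset.Ioo 0 8 := by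
    intro c hc
    obtain ⟨a, ha, rfl⟩ := Finset.mem_image.mp hc
    constructor <;>
    · intro v hv
      obtain ⟨u, hu, rfl⟩ := Finset.mem_image.mp hv
      have huL := hclssub a hu
      have huC := (hmemL u huL).1
      have h8 := hq u huC
      have hPu := (hmemL u huL).2
      refine Finset.mem_Ioo.mpr ⟨?_, h8 _⟩
      apply Nat.pos_of_ne_zero
      apply mem_suppN.mp
      apply hPu
      decide
  have hSdisj : ∀ c ∈ K, ∀ c' ∈ K, c ≠ c' → Disjoint (S c) (S c') := by
    intro c hc c' hc' hne
    rw [Finset.disjoint_left]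
    rintro v hv hv'
    obtain ⟨u, hu, rfl⟩ := Finset.mem_image.mp hv
    obtain ⟨u', hu', he⟩ := Finset.mem_image.mp hv'
    exact (hcross c hc c' hc' hne u hu u' hu').1 he.symm
  have hTdisj : ∀ c ∈ K, ∀ c' ∈ K, c ≠ c' → Disjoint (T' c) (T' c') := by
    intro c hc c' hc' hne
    rw [Finset.disjoint_left]
    rintro v hv hv'
    obtain ⟨u, hu, rfl⟩ := Finset.mem_image.mp hv
    obtain ⟨u', hu', he⟩ := Finset.mem_image.mp hv'
    exact (hcross c hc c' hc' hne u hu u' hu').2 he.symm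
  have hIoo7 : (Finset.Ioo 0 8 : Finset ℕ).card = 7 := by
    rw [Nat.card_Ioo]
  have hSsum : ∑ c ∈ K, (S c).card ≤ 7 := by
    rw [← card_biUnion hSdisj]
    rw [← hIoo7]
    apply card_le_card
    intro v hv
    obtain ⟨c, hc, hvc⟩ := mem_biUnion.mp hv
    exact (hvalsub c hc).1 hvc
  have hTsum : ∑ c ∈ K, (T' c).card ≤ 7 := by
    rw [← card_biUnion hTdisj]
    rw [← hIoo7]
    apply card_le_card
    intro v hv
    obtain ⟨c, hc, hvc⟩ := mem_biUnion.mp hv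
    exact (hvalsub c hc).2 hvc
  -- final contradiction
  have hbig : 12 + K.card ≤ ∑ c ∈ K, ((S c).card + (T' c).card) := by
    have h1 : ∑ c ∈ K, (c.card + 1) ≤ ∑ c ∈ K, ((S c).card + (T' c).card) :=
      Finset.sum_le_sum hclassineq
    rwa [Finset.sum_add_distrib, hsum12, Finset.sum_const, smul_eq_mul, mul_one] at h1
  rw [Finset.sum_add_distrib] at hbig
  omega


def codeList : List (Fin 11 → ℕ) := [
  ![2,5,9,3,7,0,0,0,0,0,0],
  ![6,10,6,0,0,1,5,0,0,0,0],
  ![4,4,3,0,0,0,0,1,1,0,0],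
  ![3,7,7,0,0,0,0,0,0,6,4],
  ![3,1,0,2,0,7,0,6,0,0,0],
  ![9,3,0,6,0,0,7,0,0,2,0],
  ![1,10,0,9,0,0,0,0,9,0,2],
  ![8,8,0,0,2,6,0,0,0,0,3],
  ![3,6,0,0,5,0,2,0,3,0,0],
  ![1,9,0,0,3,0,0,3,0,4,0],
  ![10,5,0,0,0,5,0,0,6,8,0],
  ![5,2,0,0,0,0,3,9,0,0,10],
  ![5,0,1,6,0,8,0,0,2,0,0],
  ![7,0,3,2,0,0,4,0,0,0,6],
  ![8,0,4,10,0,0,0,9,0,10,0],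
  ![4,0,10,0,5,7,0,0,0,2,0],
  ![9,0,5,0,2,0,9,5,0,0,0],
  ![6,0,2,0,8,0,0,0,5,0,1],
  ![10,0,8,0,0,2,0,2,0,0,2],
  ![1,0,8,0,0,0,1,0,10,1,0],
  ![10,0,0,10,8,3,1,0,0,0,0],
  ![4,0,0,6,10,0,0,10,0,0,8],
  ![7,0,0,4,1,0,0,0,1,6,0],
  ![6,0,0,1,0,4,0,0,0,1,10],
  ![6,0,0,8,0,0,8,3,8,0,0],
  ![2,0,0,0,9,1,0,9,10,0,0],
  ![2,0,0,0,6,0,8,0,0,9,2],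
  ![7,0,0,0,0,9,6,10,0,7,0],
  ![4,0,0,0,0,10,9,0,7,0,4],
  ![9,0,0,0,0,0,0,7,4,3,9],
  ![0,4,8,9,0,3,0,0,0,4,0],
  ![0,2,2,4,0,0,9,0,6,0,0],
  ![0,8,1,5,0,0,0,3,0,0,9],
  ![0,2,7,0,8,10,0,10,0,0,0],
  ![0,4,4,0,3,0,1,0,0,0,8],
  ![0,10,1,0,2,0,0,0,4,9,0],
  ![0,9,9,0,0,7,0,0,3,0,10],
  ![0,6,10,0,0,0,4,7,0,5,0],
  ![0,3,0,7,10,9,0,0,5,0,0],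
  ![0,10,0,1,9,0,6,1,0,0,0],
  ![0,2,0,10,5,0,0,0,0,5,1],
  ![0,5,0,8,0,8,10,0,0,0,5],
  ![0,7,0,3,0,0,0,10,7,1,0],
  ![0,7,0,0,7,4,3,0,0,3,0],
  ![0,5,0,0,6,0,0,5,8,0,4],
  ![0,8,0,0,0,3,7,2,2,0,0],
  ![0,3,0,0,0,1,0,8,0,9,8],
  ![0,1,0,0,0,0,6,0,1,4,6],
  ![0,0,5,4,6,1,0,0,0,0,7],
  ![0,0,7,8,10,0,5,0,0,7,0],
  ![0,0,10,2,4,0,0,2,3,0,0],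
  ![0,0,9,7,0,5,3,8,0,0,0],
  ![0,0,6,7,0,0,0,0,8,2,8],
  ![0,0,3,0,1,2,6,0,8,0,0],
  ![0,0,9,0,9,0,0,6,0,1,6],
  ![0,0,2,0,0,6,7,0,0,8,9],
  ![0,0,5,0,0,4,0,3,5,6,0],
  ![0,0,7,0,0,0,2,4,9,0,3],
  ![0,0,0,5,2,8,0,7,0,8,0],
  ![0,0,0,5,7,0,7,0,10,0,10],
  ![0,0,0,2,0,1,2,0,4,5,0],
  ![0,0,0,10,0,6,0,1,6,0,6],
  ![0,0,0,9,0,0,1,2,0,6,7],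
  ![0,0,0,0,4,7,4,3,0,0,1],
  ![0,0,0,0,3,3,0,0,9,10,5],
  ![0,0,0,0,8,0,10,8,6,2,0]
]

theorem code_ex : IsCWCode 11 66 5 7 11 codeList.toFinset := by
  constructor
  · decide
  refine ⟨by decide, by decide, by decide⟩


/-- There is an `(11, 66, 5, 7)_11` code, and no `(11, 66, 5, 7)_q` code for
any `q ≤ 8`; so the smallest `q` for which such a code exists is between `9`
and `11`. -/
theorem stmt_13 :
    (∃ C : Finset (Fin 11 → ℕ), IsCWCode 11 66 5 7 11 C) ∧
    (∀ q ≤ 8, ¬ ∃ C : Finset (Fin 11 → ℕ), IsCWCode 11 66 5 7 q C) := by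
  constructor
  · exact ⟨codeList.toFinset, code_ex⟩
  · rintro q hq8 ⟨C, h1, h2, h3, h4⟩
    exact nonex8 h1 (fun x hx i => lt_of_lt_of_le (h2 x hx i) hq8) h3 h4
end

section
/- Let 0 < k < n and q ≥ 2. There exists a code C ⊆ J_q(n, n−k) with k·|C| = n in which any two distinct codewords are at Hamming distance exactly n (i.e., an (n, n/k, n−k, n)_q code) if and only if k divides n and q ≥ n/k. -/
lemma modinj {m b j j' : ℕ} (hb : b ≤ m) (hj : j < m) (hj' : j' < m)
    (h : (j + m - b) % m = (j' + m - b) % m) : j = j' := by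
  have h2 : (j + m - b + b) % m = (j' + m - b + b) % m := Nat.ModEq.add_right b h
  have e1 : j + m - b + b = j + m := by omega
  have e2 : j' + m - b + b = j' + m := by omega
  rw [e1, e2, Nat.add_mod_right, Nat.add_mod_right, Nat.mod_eq_of_lt hj,
    Nat.mod_eq_of_lt hj'] at h2
  exact h2

/-- An `(n, n/k, n-k, n)_q` code exists if and only if `k` divides `n` and
`q ≥ n/k`. -/
theorem stmt_15 (n k q : ℕ) (hk : 0 < k) (hkn : k < n) (hq : 2 ≤ q) :
    (∃ C : Finset (Fin n → ℕ),
      (∀ x ∈ C, ∀ i, x i < q) ∧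
      (∀ x ∈ C, (suppN x).card = n - k) ∧
      k * C.card = n ∧
      (∀ x ∈ C, ∀ y ∈ C, x ≠ y → hammingDist x y = n)) ↔
    (k ∣ n ∧ n / k ≤ q) := by
  have hn : 0 < n := lt_trans hk hkn
  constructor
  · rintro ⟨C, hlt, hsupp, hcard, hdist⟩
    have hdvd : k ∣ n := Dvd.intro C.card hcard
    refine ⟨hdvd, ?_⟩
    have hCc : n / k = C.card := by
      have h := Nat.mul_div_cancel_left C.card hk
      rw [hcard] at h
      exact h
    rw [hCc]
    set i0 : Fin n := ⟨0, hn⟩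
    have hinj : Set.InjOn (fun x : Fin n → ℕ => x i0) C := by
      intro x hx y hy hxy
      by_contra hne
      have hd := hdist x hx y hy hne
      have huniv : ({i | x i ≠ y i} : Finset (Fin n)) = Finset.univ := by
        apply Finset.eq_univ_of_card
        simpa [Fintype.card_fin, hammingDist] using hd
      have hmem : i0 ∈ ({i | x i ≠ y i} : Finset (Fin n)) := by
        rw [huniv]; exact Finset.mem_univ i0
      simp only [Finset.mem_filter] at hmem
      exact hmem.2 hxy
    calc C.card = (C.image (fun x => x i0)).card :=
          (Finset.card_image_of_injOn hinj).symm
      _ ≤ (Finset.range q).card := by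
          apply Finset.card_le_card
          intro v hv
          simp only [Finset.mem_image] at hv
          obtain ⟨x, hx, rfl⟩ := hv
          exact Finset.mem_range.mpr (hlt x hx i0)
      _ = q := Finset.card_range q
  · rintro ⟨hdvd, hqle⟩
    obtain ⟨m, hkm⟩ := hdvd
    have hmq : m ≤ q := by
      have : n / k = m := by rw [hkm, Nat.mul_div_cancel_left m hk]
      rwa [this] at hqle
    have hmpos : 0 < m := by
      rcases Nat.eq_zero_or_pos m with h | h
      · subst h; simp at hkm; omega
      · exact h
    set f : ℕ → (Fin n → ℕ) := fun j i => (j + m - i.val / k) % m with hf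
    have hbm : ∀ i : Fin n, i.val / k < m := fun i =>
      Nat.div_lt_of_lt_mul (hkm ▸ i.isLt)
    refine ⟨(Finset.range m).image f, ?_, ?_, ?_, ?_⟩
    · intro x hx i
      simp only [Finset.mem_image] at hx
      obtain ⟨j, _, rfl⟩ := hx
      exact lt_of_lt_of_le (Nat.mod_lt _ hmpos) hmq
    · -- support cardinality
      intro x hx
      simp only [Finset.mem_image, Finset.mem_range] at hx
      obtain ⟨j, hj, rfl⟩ := hx
      have hzero : ∀ i : Fin n, f j i = 0 ↔ i.val / k = j := by
        intro i
        constructor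
        · intro h
          have hb := hbm i
          have h0 : (i.val / k + m - i.val / k) % m = 0 := by
            have e : i.val / k + m - i.val / k = m := by omega
            rw [e, Nat.mod_self]
          exact (modinj hb.le hj hb (h.trans h0.symm)).symm
        · intro h
          show (j + m - i.val / k) % m = 0
          rw [h]
          have e : j + m - j = m := by omega
          rw [e, Nat.mod_self]
      have hcompl : suppN (f j) =
          Finset.univ \ ({i : Fin n | i.val / k = j} : Finset (Fin n)) := by
        ext i
        simp only [suppN, Finset.mem_filter, Finset.mem_univ, true_and, Finset.mem_sdiff]
        rw [← hzero i]
      rw [hcompl, Finset.card_sdiff_of_subset (Finset.subset_univ _), Finset.card_univ, Fintype.card_fin]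
      congr 1
      -- card of {i | i/k = j} is k
      have hlt2 : ∀ t : Fin k, j * k + t.val < n := by
        intro t
        have h1 : j * k + t.val < j * k + k := Nat.add_lt_add_left t.isLt _
        have h2 : j * k + k = (j + 1) * k := (Nat.succ_mul j k).symm
        have h3 : (j + 1) * k ≤ m * k := Nat.mul_le_mul_right k hj
        have h4 : m * k = n := by rw [Nat.mul_comm]; exact hkm.symm
        omega
      have hbij : ({i : Fin n | i.val / k = j} : Finset (Fin n)) =
          Finset.univ.image (fun t : Fin k => (⟨j * k + t.val, hlt2 t⟩ : Fin n)) := by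
        ext i
        simp only [Finset.mem_filter, Finset.mem_univ, true_and, Finset.mem_image]
        constructor
        · intro h
          have hmod := Nat.mod_lt i.val hk
          have hdm := Nat.div_add_mod i.val k
          rw [h] at hdm
          refine ⟨⟨i.val % k, hmod⟩, ?_⟩
          apply Fin.ext
          show j * k + i.val % k = i.val
          rw [Nat.mul_comm]
          exact hdm
        · rintro ⟨t, rfl⟩
          show (j * k + t.val) / k = j
          rw [Nat.mul_comm, Nat.mul_add_div hk, Nat.div_eq_of_lt t.isLt, Nat.add_zero]
      rw [hbij, Finset.card_image_of_injective _ (fun a b hab => by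
        have h := Fin.val_eq_of_eq hab
        exact Fin.ext (Nat.add_left_cancel h)), Finset.card_univ, Fintype.card_fin]
    · -- cardinality
      have hc : ((Finset.range m).image f).card = m := by
        rw [Finset.card_image_of_injOn, Finset.card_range]
        intro a ha b hb hab
        simp only [Finset.mem_coe, Finset.mem_range] at ha hb
        have h := congrFun hab (⟨0, hn⟩ : Fin n)
        simp only [hf, Nat.zero_div, Nat.sub_zero] at h
        rw [Nat.add_mod_right, Nat.add_mod_right, Nat.mod_eq_of_lt ha, Nat.mod_eq_of_lt hb] at h
        exact h
      rw [hc]; exact hkm.symm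
    · -- distances
      intro x hx y hy hxy
      simp only [Finset.mem_image, Finset.mem_range] at hx hy
      obtain ⟨j, hj, rfl⟩ := hx
      obtain ⟨j', hj', rfl⟩ := hy
      have hjj : j ≠ j' := fun h => hxy (h ▸ rfl)
      have huniv : ({i | f j i ≠ f j' i} : Finset (Fin n)) = Finset.univ := by
        apply Finset.eq_univ_of_forall
        intro i
        simp only [Finset.mem_filter, Finset.mem_univ, true_and]
        intro h
        exact hjj (modinj (hbm i).le hj hj' h)
      calc hammingDist (f j) (f j') = ({i | f j i ≠ f j' i} : Finset (Fin n)).card := rfl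
        _ = Finset.univ.card := by rw [huniv]
        _ = n := by rw [Finset.card_univ, Fintype.card_fin]
end

section
/- Let 0 < t ≤ k < n, set M = C(n,t)/C(k,t), and suppose there exists an (n, M, n−k, n−t+1)_q code. Let B be the Steiner system S(t,k,n) whose blocks are the complements of the codeword supports, and define P = Σ_{ {β,β′} } (t − 1 − |β ∩ β′|), the sum over all unordered pairs of distinct blocks of B (every summand is nonnegative since distinct blocks intersect in at most t−1 points). Let P̃ = P/n, R = C(n,t)/C(k,t) − C(n−1,t−1)/C(k−1,t−1), a = ⌊R/(q−1)⌋, and b = R − a(q−1). Then (q−1)·C(a,2) + b·a ≤ ⌊P̃⌋; in particular, q − 1 ≥ R − ⌊P̃⌋. -/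
open Finset


lemma int_step (a m : ℤ) : 0 ≤ (m - a) * (m - a - 1) := by
  nlinarith [Int.le_self_sq (m - a)]

lemma two_choose_two (a : ℕ) : 2 * Nat.choose a 2 = a * (a - 1) := by
  cases a with
  | zero => simp
  | succ m =>
    rw [Nat.succ_sub_one, Nat.choose_two_right, Nat.succ_sub_one]
    exact Nat.mul_div_cancel' (even_iff_two_dvd.mp (by rw [mul_comm]; exact Nat.even_mul_succ_self m))

lemma cast_tct (a : ℕ) : ((2 * Nat.choose a 2 : ℕ) : ℤ) = (a : ℤ) * ((a : ℤ) - 1) := by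
  cases a with
  | zero => simp
  | succ m =>
    rw [two_choose_two]
    push_cast
    ring

/-- Per-column collision lower bound. -/
lemma col_bound (n : ℕ) (C : Finset (Fin n → ℕ)) (j : Fin n) (q a b R : ℕ)
    (hq2 : 2 ≤ q)
    (hval : ∀ x ∈ C, ∀ i, x i < q)
    (hab : a * (q - 1) + b = R)
    (hRj : R ≤ (C.filter fun x => x j ≠ 0).card) :
    (q - 1) * (2 * Nat.choose a 2) + 2 * (b * a)
      ≤ (C.offDiag.filter fun p => p.1 j = p.2 j ∧ p.1 j ≠ 0).card := by
  have hfib : (C.offDiag.filter fun p => p.1 j = p.2 j ∧ p.1 j ≠ 0).card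
      = ∑ v ∈ Finset.Icc 1 (q-1),
        ((C.filter fun x => x j = v).card * (C.filter fun x => x j = v).card
          - (C.filter fun x => x j = v).card) := by
    rw [Finset.card_eq_sum_card_fiberwise (f := fun p => p.1 j) (t := Finset.Icc 1 (q-1)) ?_]
    · apply Finset.sum_congr rfl
      intro v hv
      have hv1 : 1 ≤ v := (Finset.mem_Icc.1 hv).1
      have : (C.offDiag.filter fun p => p.1 j = p.2 j ∧ p.1 j ≠ 0).filter (fun p => p.1 j = v)
          = (C.filter fun x => x j = v).offDiag := by
        ext p
        simp only [Finset.mem_filter, Finset.mem_offDiag]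
        constructor
        · rintro ⟨⟨⟨h1, h2, h3⟩, h4, h5⟩, h6⟩
          exact ⟨⟨h1, h6⟩, ⟨h2, by (clear hRj; omega)⟩, h3⟩
        · rintro ⟨⟨h1, h2⟩, ⟨h3, h4⟩, h5⟩
          exact ⟨⟨⟨h1, h3, h5⟩, by (clear hRj; omega), by (clear hRj; omega)⟩, h2⟩
      rw [this, Finset.offDiag_card]
    · intro p hp
      simp only [Finset.mem_coe, Finset.mem_filter, Finset.mem_offDiag] at hp
      have := hval p.1 hp.1.1 j
      simp only [Finset.mem_coe, Finset.mem_Icc]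
      (clear hRj; omega)
  have hfibsum : ∑ v ∈ Finset.Icc 1 (q-1), (C.filter fun x => x j = v).card
      = (C.filter fun x => x j ≠ 0).card := by
    rw [Finset.card_eq_sum_card_fiberwise (f := fun x => x j) (t := Finset.Icc 1 (q-1)) ?_]
    · apply Finset.sum_congr rfl
      intro v hv
      have hv1 : 1 ≤ v := (Finset.mem_Icc.1 hv).1
      rw [Finset.filter_filter]
      apply congrArg Finset.card
      ext x
      simp only [Finset.mem_filter, ne_eq]
      constructor
      · rintro ⟨h1, h2⟩; exact ⟨h1, by (clear hRj hfib; omega), h2⟩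
      · rintro ⟨h1, _, h2⟩; exact ⟨h1, h2⟩
    · intro x hx
      simp only [Finset.mem_coe, Finset.mem_filter] at hx
      have := hval x hx.1 j
      simp only [Finset.mem_coe, Finset.mem_Icc]
      (clear hRj hfib; omega)
  have hcardIcc : (Finset.Icc 1 (q-1)).card = q - 1 := by
    rw [Nat.card_Icc]; (clear hRj hfib hfibsum; omega)
  -- go to ℤ
  rw [← @Nat.cast_le ℤ, hfib]
  set m : ℕ → ℕ := fun v => (C.filter fun x => x j = v).card with hm
  have hcast : ((∑ v ∈ Finset.Icc 1 (q-1), (m v * m v - m v) : ℕ) : ℤ)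
      = ∑ v ∈ Finset.Icc 1 (q-1), ((m v : ℤ) * (m v : ℤ) - (m v : ℤ)) := by
    rw [Nat.cast_sum]
    apply Finset.sum_congr rfl
    intro v _
    have hmm : m v ≤ m v * m v := by
      rcases Nat.eq_zero_or_pos (m v) with h | h
      · simp [h]
      · exact Nat.le_mul_of_pos_left _ h
    push_cast [Nat.cast_sub hmm]
    ring
  have hterm : ∀ v ∈ Finset.Icc 1 (q-1),
      (a:ℤ)*((a:ℤ)-1) + 2*(a:ℤ)*((m v : ℤ) - (a:ℤ))
        ≤ (m v : ℤ) * (m v : ℤ) - (m v : ℤ) :=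
    fun v _ => by nlinarith [int_step (a:ℤ) ((m v : ℤ))]
  have hsum := Finset.sum_le_sum hterm
  have hexp : ∑ v ∈ Finset.Icc 1 (q-1), ((a:ℤ)*((a:ℤ)-1) + 2*(a:ℤ)*((m v : ℤ) - (a:ℤ)))
      = ((q-1:ℕ):ℤ)*((a:ℤ)*((a:ℤ)-1))
        + 2*(a:ℤ)*((∑ v ∈ Finset.Icc 1 (q-1), (m v : ℤ)) - ((q-1:ℕ):ℤ)*(a:ℤ)) := by
    rw [Finset.sum_add_distrib, Finset.sum_const, hcardIcc, nsmul_eq_mul, ← Finset.mul_sum,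
      Finset.sum_sub_distrib, Finset.sum_const, hcardIcc, nsmul_eq_mul]
    try ring
  have hRsum : (R:ℤ) ≤ ∑ v ∈ Finset.Icc 1 (q-1), (m v : ℤ) := by
    calc (R:ℤ) ≤ (((C.filter fun x => x j ≠ 0).card : ℕ) : ℤ) := by exact_mod_cast hRj
      _ = ∑ v ∈ Finset.Icc 1 (q-1), (m v : ℤ) := by rw [← hfibsum]; push_cast; rfl
  have habZ : (a:ℤ)*((q-1:ℕ):ℤ) + (b:ℤ) = (R:ℤ) := by exact_mod_cast hab
  have hba : (b:ℤ) ≤ (∑ v ∈ Finset.Icc 1 (q-1), (m v : ℤ)) - ((q-1:ℕ):ℤ)*(a:ℤ) := by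
    linarith [habZ, hRsum]
  have h2ab : 2*((b:ℤ)*(a:ℤ))
      ≤ 2*(a:ℤ)*((∑ v ∈ Finset.Icc 1 (q-1), (m v : ℤ)) - ((q-1:ℕ):ℤ)*(a:ℤ)) := by
    nlinarith [hba, Int.natCast_nonneg a]
  have hlhsZ : (((q-1)*(2*Nat.choose a 2) + 2*(b*a) : ℕ) : ℤ)
      = ((q-1:ℕ):ℤ)*((a:ℤ)*((a:ℤ)-1)) + 2*((b:ℤ)*(a:ℤ)) := by
    rw [Nat.cast_add, Nat.cast_mul, cast_tct]
    push_cast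
    ring
  rw [hlhsZ, hcast]
  linarith [hsum, hexp, h2ab]

/-- Lower-bound condition on the alphabet size `q` of an
`(n, C(n,t)/C(k,t), n-k, n-t+1)_q` code, via the number of collisions in the
code matrix. Here `B` is the Steiner system formed by the complements of the
codeword supports, `P` is the sum over unordered pairs of distinct blocks of
`t - 1 - |β ∩ β'|`, `P̃ = P/n`, and
`R = C(n,t)/C(k,t) - C(n-1,t-1)/C(k-1,t-1)`. -/
theorem stmt_16 (n k t q : ℕ) (ht : 0 < t) (htk : t ≤ k) (hkn : k < n)
    (C : Finset (Fin n → ℕ))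
    (hcard : C.card = Nat.choose n t / Nat.choose k t)
    (hval : ∀ x ∈ C, ∀ i, x i < q)
    (hwt : ∀ x ∈ C, (suppN x).card = n - k)
    (hdist : ∀ x ∈ C, ∀ y ∈ C, x ≠ y → n - t + 1 ≤ hammingDist x y) :
    let B := C.image (fun x => (suppN x)ᶜ)
    let P : ℕ := (∑ p ∈ B.offDiag, (t - 1 - (p.1 ∩ p.2).card)) / 2
    let Ptilde : ℚ := (P : ℚ) / (n : ℚ)
    let R : ℕ := Nat.choose n t / Nat.choose k t
      - Nat.choose (n - 1) (t - 1) / Nat.choose (k - 1) (t - 1)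
    let a : ℕ := R / (q - 1)
    let b : ℕ := R - a * (q - 1)
    (((q - 1) * Nat.choose a 2 + b * a : ℕ) : ℤ) ≤ ⌊Ptilde⌋ ∧
    (R : ℤ) - ⌊Ptilde⌋ ≤ (q : ℤ) - 1 := by
  intro B P Ptilde R a b
  have hn0 : 0 < n := lt_of_le_of_lt (Nat.zero_le k) hkn
  have hChooseK : 0 < Nat.choose k t := Nat.choose_pos htk
  have hM1 : 1 ≤ C.card := by
    rw [hcard]
    exact (Nat.one_le_div_iff hChooseK).2 (Nat.choose_le_choose t hkn.le)
  have hCne : C.Nonempty := Finset.card_pos.1 hM1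
  -- q ≥ 2
  have hq2 : 2 ≤ q := by
    obtain ⟨x, hx⟩ := hCne
    have h1 : (suppN x).card = n - k := hwt x hx
    have h2 : (suppN x).Nonempty := Finset.card_pos.1 (by omega)
    obtain ⟨i, hi⟩ := h2
    have h3 : x i ≠ 0 := (Finset.mem_filter.1 hi).2
    have h4 : x i < q := hval x hx i
    omega
  -- key splitting: agreements
  have hsplit : ∀ x ∈ C, ∀ y ∈ C, x ≠ y →
      (Finset.univ.filter fun j => x j = y j ∧ x j ≠ 0).card
        + ((suppN x)ᶜ ∩ (suppN y)ᶜ).card ≤ t - 1 := by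
    intro x hx y hy hxy
    have hd := hdist x hx y hy hxy
    have hdn : hammingDist x y ≤ n := by
      have : (Finset.univ.filter fun i => x i ≠ y i).card ≤ (Finset.univ : Finset (Fin n)).card :=
        Finset.card_filter_le _ _
      simpa [hammingDist] using this
    have hunion : (Finset.univ.filter fun j => x j = y j ∧ x j ≠ 0)
        ∪ ((suppN x)ᶜ ∩ (suppN y)ᶜ) = Finset.univ.filter (fun j => x j = y j) := by
      ext j
      simp only [Finset.mem_union, Finset.mem_filter, Finset.mem_inter, Finset.mem_compl,
        Finset.mem_univ, true_and, suppN, not_not]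
      omega
    have hdisj : Disjoint (Finset.univ.filter fun j => x j = y j ∧ x j ≠ 0)
        ((suppN x)ᶜ ∩ (suppN y)ᶜ) := by
      rw [Finset.disjoint_left]
      intro j h1 h2
      simp only [Finset.mem_filter, Finset.mem_inter, Finset.mem_compl, Finset.mem_univ,
        true_and, suppN, not_not] at h1 h2
      omega
    have hcompl : (Finset.univ.filter fun j => x j = y j).card + hammingDist x y = n := by
      have h := Finset.card_filter_add_card_filter_not
        (s := (Finset.univ : Finset (Fin n))) (p := fun j => x j = y j)
      simpa [hammingDist, Finset.card_univ] using h
    have hcu := Finset.card_union_of_disjoint hdisj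
    rw [hunion] at hcu
    omega
  -- intersection of blocks ≤ t - 1
  have hinter : ∀ x ∈ C, ∀ y ∈ C, x ≠ y → ((suppN x)ᶜ ∩ (suppN y)ᶜ).card ≤ t - 1 := by
    intro x hx y hy hxy
    have := hsplit x hx y hy hxy
    omega
  -- injectivity of supports
  have hinj : ∀ x ∈ C, ∀ y ∈ C, (suppN x)ᶜ = (suppN y)ᶜ → x = y := by
    intro x hx y hy h
    by_contra hxy
    have hss : suppN x = suppN y := by
      have := congrArg (fun s => sᶜ) h
      simpa using this
    have hsub : (Finset.univ.filter fun i => x i ≠ y i) ⊆ suppN x := by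
      intro j hj
      simp only [Finset.mem_filter, Finset.mem_univ, true_and] at hj
      simp only [suppN, Finset.mem_filter, Finset.mem_univ, true_and]
      intro h0
      have : j ∉ suppN y := by
        rw [← hss]
        simp [suppN, h0]
      simp only [suppN, Finset.mem_filter, Finset.mem_univ, true_and, not_not] at this
      omega
    have hle : hammingDist x y ≤ n - k := by
      have := Finset.card_le_card hsub
      rw [hwt x hx] at this
      simpa [hammingDist] using this
    have := hdist x hx y hy hxy
    omega
  -- block cardinality
  have hblock : ∀ x ∈ C, ((suppN x)ᶜ).card = k := by
    intro x hx
    rw [Finset.card_compl, hwt x hx, Fintype.card_fin]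
    omega
  -- replication number bound
  have hrj : ∀ j : Fin n, (C.filter fun x => x j = 0).card * Nat.choose (k-1) (t-1)
      ≤ Nat.choose (n-1) (t-1) := by
    intro j
    set s := C.filter fun x => x j = 0 with hs
    have hmemj : ∀ x ∈ s, j ∈ (suppN x)ᶜ := by
      intro x hx
      simp only [hs, Finset.mem_filter] at hx
      simp [suppN, hx.2]
    have hdisj : ∀ x ∈ s, ∀ y ∈ s, x ≠ y →
        Disjoint (Finset.powersetCard (t-1) (((suppN x)ᶜ).erase j))
                 (Finset.powersetCard (t-1) (((suppN y)ᶜ).erase j)) := by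
      intro x hx y hy hxy
      rw [Finset.disjoint_left]
      intro T hT1 hT2
      rw [Finset.mem_powersetCard] at hT1 hT2
      have hxC : x ∈ C := (Finset.mem_filter.1 hx).1
      have hyC : y ∈ C := (Finset.mem_filter.1 hy).1
      have hjT : j ∉ T := fun h => (Finset.mem_erase.1 (hT1.1 h)).1 rfl
      have hsub : insert j T ⊆ (suppN x)ᶜ ∩ (suppN y)ᶜ := by
        intro i hi
        rcases Finset.mem_insert.1 hi with h | h
        · subst h; exact Finset.mem_inter.2 ⟨hmemj x hx, hmemj y hy⟩
        · exact Finset.mem_inter.2 ⟨Finset.erase_subset _ _ (hT1.1 h),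
            Finset.erase_subset _ _ (hT2.1 h)⟩
      have h1 : (insert j T).card = t := by
        rw [Finset.card_insert_of_notMem hjT, hT1.2]; omega
      have h2 := Finset.card_le_card hsub
      have h3 := hinter x hxC y hyC hxy
      omega
    have hcardfam : ∀ x ∈ s, (Finset.powersetCard (t-1) (((suppN x)ᶜ).erase j)).card
        = Nat.choose (k-1) (t-1) := by
      intro x hx
      rw [Finset.card_powersetCard, Finset.card_erase_of_mem (hmemj x hx),
        hblock x ((Finset.mem_filter.1 hx).1)]
    calc s.card * Nat.choose (k-1) (t-1)
        = ∑ x ∈ s, (Finset.powersetCard (t-1) (((suppN x)ᶜ).erase j)).card := by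
          rw [Finset.sum_congr rfl hcardfam, Finset.sum_const, smul_eq_mul]
      _ = (s.biUnion fun x => Finset.powersetCard (t-1) (((suppN x)ᶜ).erase j)).card :=
          (Finset.card_biUnion hdisj).symm
      _ ≤ (Finset.powersetCard (t-1) (Finset.univ.erase j)).card := by
          apply Finset.card_le_card
          apply Finset.biUnion_subset.2
          intro x hx
          exact Finset.powersetCard_mono (Finset.erase_subset_erase j (Finset.subset_univ _))
      _ = Nat.choose (n-1) (t-1) := by
          rw [Finset.card_powersetCard, Finset.card_erase_of_mem (Finset.mem_univ j),
            Finset.card_univ, Fintype.card_fin]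
  -- abbreviations
  set r : ℕ := Nat.choose (n-1) (t-1) / Nat.choose (k-1) (t-1) with hr
  have hRdef : R = C.card - r := by rw [hcard]
  have hab : a * (q - 1) + b = R := by
    have := Nat.div_mul_le_self R (q - 1)
    simp only [b, a]
    omega
  have hbq : b < q - 1 := by
    have h1 : R / (q-1) * (q-1) + R % (q-1) = R := Nat.div_add_mod' R (q-1)
    have h2 : R % (q-1) < q - 1 := Nat.mod_lt _ (by omega)
    simp only [b, a]
    omega
  -- R_j lower bound
  have hRj : ∀ j : Fin n, R ≤ (C.filter fun x => x j ≠ 0).card := by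
    intro j
    have h1 := Finset.card_filter_add_card_filter_not
      (s := C) (p := fun x => x j = 0)
    have h2 : (C.filter fun x => x j = 0).card ≤ r := by
      rw [hr]
      exact Nat.le_div_iff_mul_le (Nat.choose_pos (Nat.sub_le_sub_right htk 1)) |>.2 (hrj j)
    change _ + (C.filter fun x => x j ≠ 0).card = C.card at h1
    rw [hRdef, Nat.sub_le_iff_le_add, ← h1]
    exact le_trans (Nat.add_le_add_right h2 _) (le_of_eq (Nat.add_comm r _))
  -- collision count
  set g : ℕ := (q - 1) * Nat.choose a 2 + b * a with hg
  have hcol : ∀ j : Fin n, 2 * g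
      ≤ (C.offDiag.filter fun p => p.1 j = p.2 j ∧ p.1 j ≠ 0).card := by
    intro j
    have h := col_bound n C j q a b R hq2 hval hab (hRj j)
    calc 2 * g = (q-1)*(2*Nat.choose a 2) + 2*(b*a) := by rw [hg]; ring
      _ ≤ _ := h
  have hswap : ∑ p ∈ C.offDiag, (Finset.univ.filter fun jj => p.1 jj = p.2 jj ∧ p.1 jj ≠ 0).card
      = ∑ j : Fin n, (C.offDiag.filter fun p => p.1 j = p.2 j ∧ p.1 j ≠ 0).card := by
    simp only [Finset.card_filter]
    rw [Finset.sum_comm]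
  have hlow : n * (2 * g)
      ≤ ∑ p ∈ C.offDiag, (Finset.univ.filter fun jj => p.1 jj = p.2 jj ∧ p.1 jj ≠ 0).card := by
    rw [hswap]
    calc n * (2*g) = ∑ _j : Fin n, 2*g := by
          rw [Finset.sum_const, Finset.card_univ, Fintype.card_fin, smul_eq_mul]
      _ ≤ _ := Finset.sum_le_sum (fun j _ => hcol j)
  have hup : ∑ p ∈ C.offDiag, (Finset.univ.filter fun jj => p.1 jj = p.2 jj ∧ p.1 jj ≠ 0).card
      ≤ ∑ p ∈ C.offDiag, (t - 1 - ((suppN p.1)ᶜ ∩ (suppN p.2)ᶜ).card) := by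
    apply Finset.sum_le_sum
    intro p hp
    rw [Finset.mem_offDiag] at hp
    have h := hsplit p.1 hp.1 p.2 hp.2.1 hp.2.2
    exact Nat.le_sub_of_add_le h
  have hbij : ∑ p ∈ B.offDiag, (t - 1 - (p.1 ∩ p.2).card)
      = ∑ p ∈ C.offDiag, (t - 1 - ((suppN p.1)ᶜ ∩ (suppN p.2)ᶜ).card) := by
    simp only [B]
    symm
    apply Finset.sum_bij (i := fun p _ => ((suppN p.1)ᶜ, (suppN p.2)ᶜ))
    · rintro ⟨x, y⟩ hp
      rw [Finset.mem_offDiag] at hp ⊢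
      refine ⟨Finset.mem_image_of_mem _ hp.1, Finset.mem_image_of_mem _ hp.2.1, ?_⟩
      intro h
      exact hp.2.2 (hinj _ hp.1 _ hp.2.1 h)
    · rintro ⟨x, y⟩ hp ⟨x', y'⟩ hp' h
      rw [Finset.mem_offDiag] at hp hp'
      rw [Prod.mk.injEq] at h
      rw [Prod.mk.injEq]
      exact ⟨hinj _ hp.1 _ hp'.1 h.1, hinj _ hp.2.1 _ hp'.2.1 h.2⟩
    · rintro ⟨u, v⟩ hp
      rw [Finset.mem_offDiag] at hp
      obtain ⟨x, hx, hxu⟩ := Finset.mem_image.1 hp.1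
      obtain ⟨y, hy, hyv⟩ := Finset.mem_image.1 hp.2.1
      refine ⟨⟨x, y⟩, ?_, ?_⟩
      · rw [Finset.mem_offDiag]
        refine ⟨hx, hy, ?_⟩
        intro hxy
        simp only at hxy
        exact hp.2.2 (by rw [← hxu, ← hyv, hxy])
      · simp [hxu, hyv]
    · rintro ⟨x, y⟩ hp
      rfl
  have hP : n * g ≤ P := by
    have h2 : n * (2*g) ≤ ∑ p ∈ B.offDiag, (t - 1 - (p.1 ∩ p.2).card) := by
      rw [hbij]; exact le_trans hlow hup
    show n * g ≤ (∑ p ∈ B.offDiag, (t - 1 - (p.1 ∩ p.2).card)) / 2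
    rw [Nat.le_div_iff_mul_le (by norm_num : 0 < 2)]
    calc n * g * 2 = n * (2 * g) := by ring
      _ ≤ _ := h2
  -- part 1
  have hfloor : (g:ℤ) ≤ ⌊Ptilde⌋ := by
    rw [Int.le_floor]
    have hn' : (0:ℚ) < (n:ℚ) := by exact_mod_cast hn0
    show ((g:ℤ):ℚ) ≤ (P : ℚ) / (n : ℚ)
    rw [le_div_iff₀ hn']
    have : (g : ℚ) * (n:ℚ) ≤ (P:ℚ) := by
      exact_mod_cast (by rw [mul_comm]; exact hP : g * n ≤ P)
    exact_mod_cast this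
  constructor
  · exact hfloor
  · clear hdist hwt hval hcard hsplit hinter hinj hblock hrj hRj hcol hswap hlow hup hbij hP hM1 hCne hRdef
    have hQ : ((q-1:ℕ):ℤ) = (q:ℤ) - 1 := by omega
    have habZ : (a:ℤ)*((q:ℤ)-1) + (b:ℤ) = (R:ℤ) := by
      have h : (a:ℤ)*((q-1:ℕ):ℤ) + (b:ℤ) = (R:ℤ) := by exact_mod_cast hab
      rw [hQ] at h; linarith
    have hbqZ : (b:ℤ) < (q:ℤ) - 1 := by omega
    have hc2 : 2*((Nat.choose a 2 : ℕ):ℤ) = (a:ℤ)*((a:ℤ)-1) := by exact_mod_cast cast_tct a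
    have hgZ : 2*(g:ℤ) = ((q:ℤ)-1)*((a:ℤ)*((a:ℤ)-1)) + 2*((b:ℤ)*(a:ℤ)) := by
      rw [hg]
      push_cast
      linear_combination ((q-1:ℕ):ℤ) * hc2 + ((a:ℤ)*((a:ℤ)-1)) * hQ
    have hfin : (R:ℤ) ≤ (g:ℤ) + ((q:ℤ)-1) := by
      rcases Nat.eq_zero_or_pos a with ha | ha
      · have ha0 : (a:ℤ) = 0 := by exact_mod_cast ha
        have hg0 : (0:ℤ) ≤ (g:ℤ) := Int.natCast_nonneg g
        rw [ha0] at habZ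
        linarith
      · have ha1 : (1:ℤ) ≤ (a:ℤ) := by exact_mod_cast ha
        have hb0 : (0:ℤ) ≤ (b:ℤ) := Int.natCast_nonneg b
        have hQ1 : (1:ℤ) ≤ (q:ℤ)-1 := by omega
        have hp1 : (0:ℤ) ≤ ((q:ℤ)-1) * (((a:ℤ)-1)*((a:ℤ)-1-1)) :=
          mul_nonneg (by linarith) (int_step 1 (a:ℤ))
        have hp2 : (0:ℤ) ≤ (b:ℤ)*((a:ℤ)-1) := mul_nonneg hb0 (by linarith)
        nlinarith [hgZ, habZ, hp1, hp2]
    linarith [hfloor, hfin]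
end
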